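/- arXiv:1802.07103 — 11 statements merged into one kernel-verified Lean document; each statement's English description precedes it below -/
import Mathlib

section
/- Let G be a star graph with center c and leaves v_1,…,v_n, and let (G,λ) be a temporal graph on G with lifetime T = m. Define a Set Cover instance with universe U = {1,…,n} and sets C_i = {j : the edge v_j c is active at time i} for i = 1,…,m. Then there exists a temporal vertex cover of (G,λ) of cardinality at most k if and only if there exists a subcollection C' ⊆ {C_1,…,C_m} with |C'| ≤ k whose union is U. -/
/-- `TVC` on star temporal graphs is equivalent to `Set Cover`.
The star has center `none` and leaves `some j` (`j : Fin n`); the edge from the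
center to leaf `j` is active exactly at the time slots in `act j ⊆ [1,m]`
(so the lifetime is `T = m`). The Set Cover instance has universe `Fin n` and
sets `C_i = {j : i ∈ act j}` for `i ∈ [1,m]`, represented by their index set `I`.
There is a temporal vertex cover of cardinality at most `k` iff there is a set
cover using at most `k` of the sets `C_i`. -/
theorem stmt1 (n m k : ℕ) (hn : 1 ≤ n) (hm : 1 ≤ m)
    (act : Fin n → Finset ℕ)
    (hact : ∀ j, (act j).Nonempty ∧ act j ⊆ Finset.Icc 1 m) :
    (∃ S : Finset (Option (Fin n) × ℕ),
        (∀ p ∈ S, p.2 ∈ Finset.Icc 1 m) ∧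
        (∀ j : Fin n, ∃ p ∈ S, (p.1 = none ∨ p.1 = some j) ∧ p.2 ∈ act j) ∧
        S.card ≤ k)
    ↔ (∃ I : Finset ℕ, I ⊆ Finset.Icc 1 m ∧
        (∀ j : Fin n, ∃ i ∈ I, i ∈ act j) ∧ I.card ≤ k) := by
  constructor
  · rintro ⟨S, hIcc, hcov, hcard⟩
    refine ⟨S.image Prod.snd, ?_, ?_, ?_⟩
    · intro i hi
      obtain ⟨p, hp, rfl⟩ := Finset.mem_image.mp hi
      exact hIcc p hp
    · intro j
      obtain ⟨p, hp, _, hpa⟩ := hcov j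
      exact ⟨p.2, Finset.mem_image_of_mem _ hp, hpa⟩
    · exact le_trans (Finset.card_image_le) hcard
  · rintro ⟨I, hIcc, hcov, hcard⟩
    refine ⟨I.image (fun i => (none, i)), ?_, ?_, ?_⟩
    · intro p hp
      obtain ⟨i, hi, rfl⟩ := Finset.mem_image.mp hp
      exact hIcc hi
    · intro j
      obtain ⟨i, hi, hia⟩ := hcov j
      exact ⟨(none, i), Finset.mem_image_of_mem _ hi, Or.inl rfl, hia⟩
    · exact le_trans (Finset.card_image_le) hcard
end

section
/- Let G be a graph with m edges and let H be obtained from G by subdividing every edge exactly 4 times. Then τ(H) = τ(G) + 2m, where τ denotes the vertex cover number. -/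
/-- The vertex cover number of a finite graph. -/
noncomputable def vcNum {V : Type*} [Fintype V] (G : SimpleGraph V) : ℕ :=
  sInf {n | ∃ C : Finset V, (∀ e ∈ G.edgeSet, ∃ w ∈ C, w ∈ e) ∧ C.card = n}

/-- The edge set of the 4-subdivision of `G`: each edge `e = uv` of `G` is replaced by
the path `u - (e,0) - (e,1) - (e,2) - (e,3) - v`, with four new internal vertices per edge. -/
noncomputable def subdiv4Edges {V : Type*} [Fintype V] [DecidableEq V] (G : SimpleGraph V)
    [DecidableRel G.Adj] :
    Set (Sym2 (V ⊕ ({e : Sym2 V // e ∈ G.edgeFinset} × Fin 4))) :=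
  ⋃ e : {e : Sym2 V // e ∈ G.edgeFinset},
    {s(Sum.inl (Quot.out e.1).1, Sum.inr (e, 0)),
     s(Sum.inr (e, 0), Sum.inr (e, 1)),
     s(Sum.inr (e, 1), Sum.inr (e, 2)),
     s(Sum.inr (e, 2), Sum.inr (e, 3)),
     s(Sum.inr (e, 3), Sum.inl (Quot.out e.1).2)}

lemma vcNum_le' {V : Type*} [Fintype V] (G : SimpleGraph V) {C : Finset V}
    (h : ∀ e ∈ G.edgeSet, ∃ w ∈ C, w ∈ e) : vcNum G ≤ C.card :=
  Nat.sInf_le ⟨C, h, rfl⟩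

lemma exists_vcCover {V : Type*} [Fintype V] (G : SimpleGraph V) :
    ∃ C : Finset V, (∀ e ∈ G.edgeSet, ∃ w ∈ C, w ∈ e) ∧ C.card = vcNum G := by
  have hne : {n | ∃ C : Finset V, (∀ e ∈ G.edgeSet, ∃ w ∈ C, w ∈ e) ∧ C.card = n}.Nonempty :=
    ⟨Finset.univ.card, Finset.univ,
      fun e _ => ⟨e.out.1, Finset.mem_univ _, Sym2.out_fst_mem e⟩, rfl⟩
  exact Nat.sInf_mem hne

lemma sym2_out_eq {V : Type*} (e : Sym2 V) : e = s((Quot.out e).1, (Quot.out e).2) :=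
  (Quot.out_eq e).symm

section main
variable {V : Type*} [Fintype V] [DecidableEq V] (G : SimpleGraph V) [DecidableRel G.Adj]

lemma mem_subdiv4_edgeSet (e : {e : Sym2 V // e ∈ G.edgeFinset})
    (a b : V ⊕ ({e : Sym2 V // e ∈ G.edgeFinset} × Fin 4)) (hab : a ≠ b)
    (h : s(a, b) ∈ ({s(Sum.inl (Quot.out e.1).1, Sum.inr (e, 0)),
     s(Sum.inr (e, 0), Sum.inr (e, 1)),
     s(Sum.inr (e, 1), Sum.inr (e, 2)),
     s(Sum.inr (e, 2), Sum.inr (e, 3)),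
     s(Sum.inr (e, 3), Sum.inl (Quot.out e.1).2)} :
       Set (Sym2 (V ⊕ ({e : Sym2 V // e ∈ G.edgeFinset} × Fin 4))))) :
    s(a, b) ∈ (SimpleGraph.fromEdgeSet (subdiv4Edges G)).edgeSet := by
  rw [SimpleGraph.edgeSet_fromEdgeSet]
  refine ⟨Set.mem_iUnion.2 ⟨e, h⟩, ?_⟩
  simpa [Sym2.mk_isDiag_iff] using hab

set_option maxHeartbeats 2000000 in
theorem stmt4' :
    vcNum (SimpleGraph.fromEdgeSet (subdiv4Edges G)) = vcNum G + 2 * G.edgeFinset.card := by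
  classical
  set E := {e : Sym2 V // e ∈ G.edgeFinset} with hE
  set m := G.edgeFinset.card with hm
  have hcardE : Fintype.card E = m := Fintype.card_coe _
  apply le_antisymm
  · -- τ(H) ≤ τ(G) + 2m
    obtain ⟨C, hC, hCcard⟩ := exists_vcCover G
    set f : E → Finset (V ⊕ (E × Fin 4)) := fun e =>
      if (Quot.out e.1).1 ∈ C then {Sum.inr (e, 1), Sum.inr (e, 3)}
      else {Sum.inr (e, 0), Sum.inr (e, 2)} with hf
    set D : Finset (V ⊕ (E × Fin 4)) := C.image Sum.inl ∪ Finset.univ.biUnion f with hD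
    have hmemD : ∀ (e : E) (i : Fin 4), Sum.inr (e, i) ∈ f e → Sum.inr (e, i) ∈ D := by
      intro e i hi
      exact Finset.mem_union_right _ (Finset.mem_biUnion.2 ⟨e, Finset.mem_univ _, hi⟩)
    have hcov : ∀ s ∈ (SimpleGraph.fromEdgeSet (subdiv4Edges G)).edgeSet, ∃ w ∈ D, w ∈ s := by
      intro s hs
      rw [SimpleGraph.edgeSet_fromEdgeSet] at hs
      obtain ⟨S, ⟨e, rfl⟩, hsS⟩ := hs.1
      simp only [Set.mem_insert_iff, Set.mem_singleton_iff] at hsS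
      by_cases hu : (Quot.out e.1).1 ∈ C
      · rcases hsS with rfl | rfl | rfl | rfl | rfl
        · exact ⟨Sum.inl (Quot.out e.1).1, Finset.mem_union_left _
            (Finset.mem_image_of_mem _ hu), by simp⟩
        · exact ⟨Sum.inr (e, 1), hmemD e 1 (by simp [hf, hu]), by simp⟩
        · exact ⟨Sum.inr (e, 1), hmemD e 1 (by simp [hf, hu]), by simp⟩
        · exact ⟨Sum.inr (e, 3), hmemD e 3 (by simp [hf, hu]), by simp⟩
        · exact ⟨Sum.inr (e, 3), hmemD e 3 (by simp [hf, hu]), by simp⟩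
      · have hv : (Quot.out e.1).2 ∈ C := by
          obtain ⟨w, hwC, hwe⟩ := hC e.1 (SimpleGraph.mem_edgeFinset.1 e.2)
          rw [sym2_out_eq e.1, Sym2.mem_iff] at hwe
          rcases hwe with rfl | rfl
          · exact absurd hwC hu
          · exact hwC
        rcases hsS with rfl | rfl | rfl | rfl | rfl
        · exact ⟨Sum.inr (e, 0), hmemD e 0 (by simp [hf, hu]), by simp⟩
        · exact ⟨Sum.inr (e, 0), hmemD e 0 (by simp [hf, hu]), by simp⟩
        · exact ⟨Sum.inr (e, 2), hmemD e 2 (by simp [hf, hu]), by simp⟩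
        · exact ⟨Sum.inr (e, 2), hmemD e 2 (by simp [hf, hu]), by simp⟩
        · exact ⟨Sum.inl (Quot.out e.1).2, Finset.mem_union_left _
            (Finset.mem_image_of_mem _ hv), by simp⟩
    have hcard : D.card ≤ vcNum G + 2 * m := by
      calc D.card ≤ (C.image Sum.inl).card + (Finset.univ.biUnion f).card :=
            Finset.card_union_le _ _
        _ ≤ C.card + ∑ e : E, (f e).card := by
            gcongr
            · exact (Finset.card_image_le)
            · exact Finset.card_biUnion_le
        _ ≤ C.card + ∑ _e : E, 2 := by
            gcongr with e
            by_cases h : (Quot.out e.1).1 ∈ C <;>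
              simp only [hf, h, if_true, if_false] <;>
              exact le_trans (Finset.card_insert_le _ _) (by simp)
        _ = vcNum G + 2 * m := by
            rw [hCcard, Finset.sum_const, Finset.card_univ, hcardE, smul_eq_mul, mul_comm]
    exact le_trans (vcNum_le' _ hcov) hcard
  · -- τ(G) + 2m ≤ τ(H)
    obtain ⟨D, hD, hDcard⟩ := exists_vcCover (SimpleGraph.fromEdgeSet (subdiv4Edges G))
    have cov : ∀ (e : E) (a b : V ⊕ (E × Fin 4)), a ≠ b →
        s(a, b) ∈ ({s(Sum.inl (Quot.out e.1).1, Sum.inr (e, 0)),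
          s(Sum.inr (e, 0), Sum.inr (e, 1)),
          s(Sum.inr (e, 1), Sum.inr (e, 2)),
          s(Sum.inr (e, 2), Sum.inr (e, 3)),
          s(Sum.inr (e, 3), Sum.inl (Quot.out e.1).2)} : Set (Sym2 (V ⊕ (E × Fin 4)))) →
        a ∈ D ∨ b ∈ D := by
      intro e a b hab hmem
      obtain ⟨w, hwD, hw⟩ := hD _ (mem_subdiv4_edgeSet G e a b hab hmem)
      rw [Sym2.mem_iff] at hw
      rcases hw with rfl | rfl
      · exact Or.inl hwD
      · exact Or.inr hwD
    set C0 : Finset V := Finset.univ.filter (fun v => Sum.inl v ∈ D) with hC0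
    set Bad : Finset E := Finset.univ.filter
      (fun e => Sum.inl (Quot.out e.1).1 ∉ D ∧ Sum.inl (Quot.out e.1).2 ∉ D) with hBad
    set C : Finset V := C0 ∪ Bad.image (fun e => (Quot.out e.1).1) with hCdef
    have hCcover : ∀ s ∈ G.edgeSet, ∃ w ∈ C, w ∈ s := by
      intro s hs
      set e : E := ⟨s, SimpleGraph.mem_edgeFinset.2 hs⟩ with he
      have hmem1 : (Quot.out s).1 ∈ s := Sym2.out_fst_mem s
      have hmem2 : (Quot.out s).2 ∈ s := Sym2.out_snd_mem s
      by_cases h1 : Sum.inl (Quot.out s).1 ∈ D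
      · exact ⟨(Quot.out s).1, Finset.mem_union_left _ (Finset.mem_filter.2 ⟨Finset.mem_univ _, h1⟩), hmem1⟩
      by_cases h2 : Sum.inl (Quot.out s).2 ∈ D
      · exact ⟨(Quot.out s).2, Finset.mem_union_left _ (Finset.mem_filter.2 ⟨Finset.mem_univ _, h2⟩), hmem2⟩
      · refine ⟨(Quot.out s).1, Finset.mem_union_right _ ?_, hmem1⟩
        refine Finset.mem_image_of_mem _ (a := e) ?_
        rw [hBad, Finset.mem_filter]
        exact ⟨Finset.mem_univ _, h1, h2⟩
    set k : E → ℕ := fun e => (Finset.univ.filter fun i : Fin 4 => Sum.inr (e, i) ∈ D).card with hk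
    have hk2 : ∀ e : E, 2 ≤ k e := by
      intro e
      have h01 := cov e (Sum.inr (e, 0)) (Sum.inr (e, 1)) (by simp) (by simp)
      have h23 := cov e (Sum.inr (e, 2)) (Sum.inr (e, 3)) (by simp) (by simp)
      rw [Nat.succ_le_iff]
      rw [Finset.one_lt_card]
      rcases h01 with h | h <;> rcases h23 with h' | h'
      · exact ⟨0, by simp [h], 2, by simp [h'], by decide⟩
      · exact ⟨0, by simp [h], 3, by simp [h'], by decide⟩
      · exact ⟨1, by simp [h], 2, by simp [h'], by decide⟩
      · exact ⟨1, by simp [h], 3, by simp [h'], by decide⟩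
    have hk3 : ∀ e ∈ Bad, 3 ≤ k e := by
      intro e heB
      rw [hBad, Finset.mem_filter] at heB
      obtain ⟨-, hu, hv⟩ := heB
      have h0 : Sum.inr (e, (0 : Fin 4)) ∈ D := by
        rcases cov e (Sum.inl (Quot.out e.1).1) (Sum.inr (e, 0)) (by simp) (by simp) with h | h
        · exact absurd h hu
        · exact h
      have h3 : Sum.inr (e, (3 : Fin 4)) ∈ D := by
        rcases cov e (Sum.inr (e, 3)) (Sum.inl (Quot.out e.1).2) (by simp) (by simp) with h | h
        · exact h
        · exact absurd h hv
      have h12 := cov e (Sum.inr (e, 1)) (Sum.inr (e, 2)) (by simp) (by simp)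
      rcases h12 with h | h
      · calc (3 : ℕ) = ({0, 1, 3} : Finset (Fin 4)).card := by decide
          _ ≤ k e := Finset.card_le_card (by
              intro i hi
              fin_cases hi <;> simp [hk, h0, h, h3])
      · calc (3 : ℕ) = ({0, 2, 3} : Finset (Fin 4)).card := by decide
          _ ≤ k e := Finset.card_le_card (by
              intro i hi
              fin_cases hi <;> simp [hk, h0, h, h3])
    -- counting lemma: C0.card + ∑ k e ≤ D.card
    have hcount : C0.card + ∑ e : E, k e ≤ D.card := by
      set T : Finset (V ⊕ (E × Fin 4)) := C0.image Sum.inl ∪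
        Finset.univ.biUnion (fun e : E =>
          (Finset.univ.filter fun i : Fin 4 => Sum.inr (e, i) ∈ D).image
            (fun i => Sum.inr (e, i))) with hT
      have hTsub : T ⊆ D := by
        intro x hx
        rw [hT, Finset.mem_union] at hx
        rcases hx with hx | hx
        · obtain ⟨v, hv, rfl⟩ := Finset.mem_image.1 hx
          exact (Finset.mem_filter.1 hv).2
        · obtain ⟨e, -, hx⟩ := Finset.mem_biUnion.1 hx
          obtain ⟨i, hi, rfl⟩ := Finset.mem_image.1 hx
          exact (Finset.mem_filter.1 hi).2
      have hTcard : T.card = C0.card + ∑ e : E, k e := by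
        rw [hT, Finset.card_union_of_disjoint, Finset.card_image_of_injective _ Sum.inl_injective,
          Finset.card_biUnion]
        · congr 1
          refine Finset.sum_congr rfl fun e _ => ?_
          rw [Finset.card_image_of_injective]
          intro i j hij
          simpa using hij
        · intro e _ e' _ hee'
          simp only [Finset.disjoint_left]
          intro x hx hx'
          obtain ⟨i, -, rfl⟩ := Finset.mem_image.1 hx
          obtain ⟨j, -, hj⟩ := Finset.mem_image.1 hx'
          exact hee' ((congrArg Prod.fst (Sum.inr_injective hj)).symm)
        · simp only [Finset.disjoint_left]
          intro x hx hx'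
          obtain ⟨v, -, rfl⟩ := Finset.mem_image.1 hx
          obtain ⟨e, -, hx'⟩ := Finset.mem_biUnion.1 hx'
          obtain ⟨i, -, hj⟩ := Finset.mem_image.1 hx'
          exact Sum.inl_ne_inr hj.symm
      rw [← hTcard]
      exact Finset.card_le_card hTsub
    have hsumk : 2 * m + Bad.card ≤ ∑ e : E, k e := by
      calc 2 * m + Bad.card = ∑ e : E, (2 + if e ∈ Bad then 1 else 0) := by
            rw [Finset.sum_add_distrib, Finset.sum_const, Finset.card_univ, hcardE,
              smul_eq_mul, mul_comm]
            congr 1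
            simp [Finset.sum_ite_mem]
        _ ≤ ∑ e : E, k e := by
            refine Finset.sum_le_sum fun e _ => ?_
            by_cases h : e ∈ Bad
            · simpa [h] using hk3 e h
            · simpa [h] using hk2 e
    have hCcard : C.card ≤ C0.card + Bad.card :=
      le_trans (Finset.card_union_le _ _) (by gcongr; exact Finset.card_image_le)
    have := vcNum_le' G hCcover
    omega
  
end main

/-- If `H` is obtained from `G` (with `m` edges) by subdividing every edge exactly 4 times,
then `τ(H) = τ(G) + 2m`. -/
theorem stmt4 {V : Type*} [Fintype V] [DecidableEq V] (G : SimpleGraph V)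
    [DecidableRel G.Adj] :
    vcNum (SimpleGraph.fromEdgeSet (subdiv4Edges G)) = vcNum G + 2 * G.edgeFinset.card := by
  exact stmt4' G
end

section
/- Let G be a graph with m edges and let H be obtained from G by subdividing every edge exactly 4 times. For every vertex cover S_H of H there exists a vertex cover S_G of G with |S_G| ≤ |S_H| − 2m. -/
/-- The edges of `G` as a type. -/
abbrev SubE {V : Type*} [Fintype V] [DecidableEq V] (G : SimpleGraph V)
    [DecidableRel G.Adj] := {e : Sym2 V // e ∈ G.edgeFinset}

/-- Let `H` be the 4-subdivision of `G` (with `m` edges). For every vertex cover `S_H`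
of `H` there is a vertex cover `S_G` of `G` with `|S_G| + 2m ≤ |S_H|`
(i.e. `|S_G| ≤ |S_H| - 2m`). -/
theorem stmt5 {V : Type*} [Fintype V] [DecidableEq V] (G : SimpleGraph V)
    [DecidableRel G.Adj]
    (SH : Finset (V ⊕ ({e : Sym2 V // e ∈ G.edgeFinset} × Fin 4)))
    (hSH : ∀ e ∈ (SimpleGraph.fromEdgeSet (subdiv4Edges G)).edgeSet, ∃ w ∈ SH, w ∈ e) :
    ∃ SG : Finset V, (∀ e ∈ G.edgeSet, ∃ w ∈ SG, w ∈ e) ∧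
      SG.card + 2 * G.edgeFinset.card ≤ SH.card := by
  classical
  -- every path edge is covered
  have key : ∀ (e : SubE G) (x y : V ⊕ (SubE G × Fin 4)), x ≠ y →
      s(x, y) ∈ ({s(Sum.inl (Quot.out e.1).1, Sum.inr (e, 0)),
        s(Sum.inr (e, 0), Sum.inr (e, 1)),
        s(Sum.inr (e, 1), Sum.inr (e, 2)),
        s(Sum.inr (e, 2), Sum.inr (e, 3)),
        s(Sum.inr (e, 3), Sum.inl (Quot.out e.1).2)} : Set (Sym2 (V ⊕ (SubE G × Fin 4)))) →
      x ∈ SH ∨ y ∈ SH := by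
    intro e x y hxy hmem
    obtain ⟨w, hw, hwm⟩ := hSH s(x, y) (by
      rw [SimpleGraph.edgeSet_fromEdgeSet]
      refine ⟨Set.mem_iUnion.mpr ⟨e, hmem⟩, ?_⟩
      simp [hxy])
    rcases Sym2.mem_iff.mp hwm with h | h
    · exact Or.inl (h ▸ hw)
    · exact Or.inr (h ▸ hw)
  -- the internal vertices of edge e that lie in SH
  set S : SubE G → Finset (Fin 4) :=
    fun e => Finset.univ.filter (fun i => Sum.inr (e, i) ∈ SH) with hSdef
  have hmemS : ∀ (e : SubE G) (i : Fin 4), i ∈ S e ↔ Sum.inr (e, i) ∈ SH := by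
    intro e i; simp [hSdef]
  have h01 : ∀ e : SubE G, Sum.inr (e, 0) ∈ SH ∨ Sum.inr (e, 1) ∈ SH := by
    intro e
    exact key e _ _ (by simp) (by simp)
  have h12 : ∀ e : SubE G, Sum.inr (e, 1) ∈ SH ∨ Sum.inr (e, 2) ∈ SH := by
    intro e
    exact key e _ _ (by simp) (by simp)
  have h23 : ∀ e : SubE G, Sum.inr (e, 2) ∈ SH ∨ Sum.inr (e, 3) ∈ SH := by
    intro e
    exact key e _ _ (by simp) (by simp)
  have hu0 : ∀ e : SubE G, Sum.inl (Quot.out e.1).1 ∈ SH ∨ Sum.inr (e, 0) ∈ SH := by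
    intro e
    exact key e _ _ (by simp) (by simp)
  have h3v : ∀ e : SubE G, Sum.inr (e, 3) ∈ SH ∨ Sum.inl (Quot.out e.1).2 ∈ SH := by
    intro e
    exact key e _ _ (by simp) (by simp)
  have hS2 : ∀ e : SubE G, 2 ≤ (S e).card := by
    intro e
    rcases h01 e with h | h <;> rcases h23 e with h' | h' <;>
      exact Finset.one_lt_card.mpr
        ⟨_, (hmemS e _).mpr h, _, (hmemS e _).mpr h', by decide⟩
  have hS3 : ∀ e : SubE G, Sum.inl (Quot.out e.1).1 ∉ SH → Sum.inl (Quot.out e.1).2 ∉ SH →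
      3 ≤ (S e).card := by
    intro e hu hv
    have h0 : Sum.inr (e, (0 : Fin 4)) ∈ SH := (hu0 e).resolve_left hu
    have h3 : Sum.inr (e, (3 : Fin 4)) ∈ SH := (h3v e).resolve_right hv
    rcases h12 e with h | h <;>
      exact Finset.two_lt_card.mpr
        ⟨_, (hmemS e _).mpr h0, _, (hmemS e _).mpr h, _, (hmemS e _).mpr h3,
          by decide, by decide, by decide⟩
  -- the pieces of SH
  set SG0 : Finset V := Finset.univ.filter (fun v => Sum.inl v ∈ SH) with hSG0
  set Bad : Finset (SubE G) := Finset.univ.filter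
    (fun e => Sum.inl (Quot.out e.1).1 ∉ SH ∧ Sum.inl (Quot.out e.1).2 ∉ SH) with hBad
  set SG : Finset V := SG0 ∪ Bad.image (fun e => (Quot.out e.1).1) with hSG
  refine ⟨SG, ?_, ?_⟩
  · -- SG is a vertex cover of G
    intro e he
    set e' : SubE G := ⟨e, SimpleGraph.mem_edgeFinset.mpr he⟩ with he'
    by_cases hu : Sum.inl (Quot.out e).1 ∈ SH
    · exact ⟨(Quot.out e).1, by simp [hSG, hSG0, hu], Sym2.out_fst_mem e⟩
    · by_cases hv : Sum.inl (Quot.out e).2 ∈ SH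
      · exact ⟨(Quot.out e).2, by simp [hSG, hSG0, hv], Sym2.out_snd_mem e⟩
      · refine ⟨(Quot.out e).1, ?_, Sym2.out_fst_mem e⟩
        have : e' ∈ Bad := by simp [hBad, he', hu, hv]
        exact Finset.mem_union_right _ (Finset.mem_image.mpr ⟨e', this, rfl⟩)
  · -- cardinality
    have hcard : SG.card ≤ SG0.card + Bad.card :=
      le_trans (Finset.card_union_le _ _)
        (by gcongr; exact Finset.card_image_le)
    -- split SH
    have hL : SH.filter (fun w => w.isLeft) = SG0.image Sum.inl := by
      ext w
      cases w with
      | inl v => simp [hSG0]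
      | inr p => simp [hSG0]
    set T : Finset (SubE G × Fin 4) := Finset.univ.filter (fun p => Sum.inr p ∈ SH) with hT
    have hR : SH.filter (fun w => ¬ w.isLeft) = T.image Sum.inr := by
      ext w
      cases w with
      | inl v => simp [hT]
      | inr p => simp [hT]
    have hsplit : SH.card = SG0.card + T.card := by
      rw [← Finset.card_filter_add_card_filter_not (s := SH)
        (p := fun w => w.isLeft), hL, hR,
        Finset.card_image_of_injective _ Sum.inl_injective,
        Finset.card_image_of_injective _ Sum.inr_injective]
    have hTsum : T.card = ∑ e : SubE G, (S e).card := by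
      rw [Finset.card_eq_sum_card_fiberwise
        (f := Prod.fst) (t := Finset.univ) (fun x _ => Finset.mem_univ _)]
      refine Finset.sum_congr rfl (fun e _ => ?_)
      have : T.filter (fun p => p.1 = e) = (S e).image (fun i => (e, i)) := by
        ext ⟨e'', i⟩
        simp only [Finset.mem_filter, Finset.mem_image, hT, hSdef,
          Finset.mem_univ, true_and, Prod.mk.injEq]
        constructor
        · rintro ⟨h1, rfl⟩; exact ⟨i, h1, rfl, rfl⟩
        · rintro ⟨j, hj, rfl, rfl⟩; exact ⟨hj, rfl⟩
      rw [this, Finset.card_image_of_injective _ (fun a b h => by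
        simpa using h)]
    have hm : G.edgeFinset.card = Fintype.card (SubE G) := (Fintype.card_coe _).symm
    have hsum : 2 * Fintype.card (SubE G) + Bad.card ≤ ∑ e : SubE G, (S e).card := by
      calc 2 * Fintype.card (SubE G) + Bad.card
          = ∑ e : SubE G, (2 + if e ∈ Bad then 1 else 0) := by
            simp only [Finset.sum_add_distrib, Finset.sum_ite_mem, Finset.card_univ,
              Finset.sum_const, smul_eq_mul, mul_one]
            rw [Finset.inter_eq_right.mpr (fun x _ => Finset.mem_univ _), mul_comm]
        _ ≤ ∑ e : SubE G, (S e).card := by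
            refine Finset.sum_le_sum (fun e _ => ?_)
            by_cases hb : e ∈ Bad
            · simp only [hb, if_pos]
              have hb' : Sum.inl (Quot.out e.1).1 ∉ SH ∧ Sum.inl (Quot.out e.1).2 ∉ SH := by
                simpa [hBad] using hb
              have := hS3 e hb'.1 hb'.2
              omega
            · simp only [hb, if_neg, not_false_iff, add_zero]
              exact hS2 e
    omega
end

section
/- Let (G₀,λ) be a temporal graph of lifetime T whose underlying graph G₀ has exactly two vertices u, v and the single edge uv, and let Δ ≤ T. For each i ∈ λ(uv) define the interval I_i = [i−Δ+1, i] ∩ [1, T−Δ+1], and let 𝓘 = {I_i : i ∈ λ(uv)}. Then, for any i_1,…,i_k ∈ λ(uv), the subfamily {I_{i_1},…,I_{i_k}} covers ⋃_{I∈𝓘} I if and only if {(u,i_1),…,(u,i_k)} is a sliding Δ-window temporal vertex cover of (G₀,λ). -/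
/-- The interval `I_i = [i-Δ+1, i] ∩ [1, T-Δ+1]` of starting slots of windows
containing time slot `i`. -/
def Ival (T Δ i : ℕ) : Finset ℕ :=
  Finset.Icc (i + 1 - Δ) i ∩ Finset.Icc 1 (T - Δ + 1)

/-- For a single-edge temporal graph on vertices `u,v` with label set `L = λ(uv)`,
a subfamily `{I_i : i ∈ F}` (with `F ⊆ L`) covers `⋃_{i ∈ L} I_i` iff the set of
vertex appearances `{(u,i) : i ∈ F}` is a sliding `Δ`-window temporal vertex cover
of the single-edge temporal graph. -/
theorem stmt8 (T Δ : ℕ) (hΔ1 : 1 ≤ Δ) (hΔT : Δ ≤ T)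
    (L : Finset ℕ) (hL : L.Nonempty) (hLT : L ⊆ Finset.Icc 1 T)
    (F : Finset ℕ) (hF : F ⊆ L) :
    (∀ x ∈ L.biUnion (Ival T Δ), ∃ i ∈ F, x ∈ Ival T Δ i)
    ↔ (∀ t, 1 ≤ t → t ≤ T - Δ + 1 → (L ∩ Finset.Icc t (t + Δ - 1)).Nonempty →
        ∃ i ∈ F, i ∈ L ∧ i ∈ Finset.Icc t (t + Δ - 1)) := by
  simp only [Finset.mem_biUnion, Ival, Finset.mem_inter, Finset.mem_Icc,
    Finset.Nonempty, Finset.mem_inter, Finset.mem_Icc]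
  constructor
  · intro h t ht1 ht2 ⟨j, hjL, hjt⟩
    obtain ⟨i, hiF, hi⟩ := h t ⟨j, hjL, ⟨by omega, by omega⟩, by omega, by omega⟩
    exact ⟨i, hiF, hF hiF, by omega⟩
  · intro h x ⟨j, hjL, hj⟩
    obtain ⟨i, hiF, hiL, hi⟩ := h x (by omega) (by omega) ⟨j, hjL, by omega, by omega⟩
    exact ⟨i, hiF, ⟨by omega, by omega⟩, by omega, by omega⟩
end

section
/- Let (G,λ) be a temporal graph with lifetime T in which every snapshot G_t has maximum degree at most d. For each edge e = uv of G, let S'(e) be a minimum-cardinality sliding Δ-window temporal vertex cover of the single-edge temporal graph (G[{u,v}],λ) with the same labels on e, and let S = ⋃_{e∈E} S'(e). Then S is a sliding Δ-window temporal vertex cover of (G,λ) and |S| ≤ d·|S*|, where S* is a minimum-cardinality sliding Δ-window temporal vertex cover of (G,λ). -/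
/-- Sliding `Δ`-window temporal vertex cover. -/
def SWTVC {V : Type*} (G : SimpleGraph V) (lab : Sym2 V → Finset ℕ)
    (T Δ : ℕ) (S : Finset (V × ℕ)) : Prop :=
  ∀ t, 1 ≤ t → t ≤ T - Δ + 1 → ∀ e ∈ G.edgeSet,
    ((lab e) ∩ Finset.Icc t (t + Δ - 1)).Nonempty →
    ∃ p ∈ S, p.1 ∈ e ∧ p.2 ∈ lab e ∧ p.2 ∈ Finset.Icc t (t + Δ - 1)

/-- `d`-approximation on always degree at most `d` temporal graphs: if every
snapshot has maximum degree at most `d`, and for every edge `e` the set `s' e` is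
a minimum-cardinality sliding `Δ`-window temporal vertex cover of the single-edge
temporal graph induced by `e`, then `S = ⋃_e s' e` is a sliding `Δ`-window temporal
vertex cover of `(G,λ)` of cardinality at most `d` times the optimum. -/
theorem stmt9 {V : Type*} [Fintype V] [DecidableEq V] (G : SimpleGraph V)
    [DecidableRel G.Adj] (lab : Sym2 V → Finset ℕ) (T Δ d : ℕ)
    (hΔ1 : 1 ≤ Δ) (hΔT : Δ ≤ T)
    (hdeg : ∀ t ∈ Finset.Icc 1 T, ∀ v : V,
        (G.edgeFinset.filter (fun e => v ∈ e ∧ t ∈ lab e)).card ≤ d)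
    (s' : Sym2 V → Finset (V × ℕ))
    (hs'mem : ∀ e ∈ G.edgeFinset, ∀ p ∈ s' e, p.1 ∈ e ∧ p.2 ∈ Finset.Icc 1 T)
    (hs'cov : ∀ e ∈ G.edgeFinset, ∀ t, 1 ≤ t → t ≤ T - Δ + 1 →
        (lab e ∩ Finset.Icc t (t + Δ - 1)).Nonempty →
        ∃ p ∈ s' e, p.2 ∈ lab e ∧ p.2 ∈ Finset.Icc t (t + Δ - 1))
    (hs'min : ∀ e ∈ G.edgeFinset, ∀ S'' : Finset (V × ℕ),
        (∀ p ∈ S'', p.1 ∈ e ∧ p.2 ∈ Finset.Icc 1 T) →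
        (∀ t, 1 ≤ t → t ≤ T - Δ + 1 → (lab e ∩ Finset.Icc t (t + Δ - 1)).Nonempty →
          ∃ p ∈ S'', p.2 ∈ lab e ∧ p.2 ∈ Finset.Icc t (t + Δ - 1)) →
        (s' e).card ≤ S''.card) :
    SWTVC G lab T Δ (G.edgeFinset.biUnion s') ∧
    ∀ Sstar : Finset (V × ℕ), SWTVC G lab T Δ Sstar →
      (∀ S'' : Finset (V × ℕ), SWTVC G lab T Δ S'' → Sstar.card ≤ S''.card) →
      (G.edgeFinset.biUnion s').card ≤ d * Sstar.card := by

  constructor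
  · intro t ht1 ht2 e he hne
    have he' : e ∈ G.edgeFinset := SimpleGraph.mem_edgeFinset.2 he
    obtain ⟨p, hp, hplab, hpw⟩ := hs'cov e he' t ht1 ht2 hne
    exact ⟨p, Finset.mem_biUnion.2 ⟨e, he', hp⟩, (hs'mem e he' p hp).1, hplab, hpw⟩
  · intro Sstar hSstar _
    have key : ∀ e ∈ G.edgeFinset, (s' e).card ≤
        (Sstar.filter (fun p => p.1 ∈ e ∧ p.2 ∈ lab e ∧ p.2 ∈ Finset.Icc 1 T)).card := by
      intro e he
      apply hs'min e he
      · intro p hp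
        simp only [Finset.mem_filter] at hp
        exact ⟨hp.2.1, hp.2.2.2⟩
      · intro t ht1 ht2 hne
        obtain ⟨p, hp, hpe, hplab, hpw⟩ :=
          hSstar t ht1 ht2 e (SimpleGraph.mem_edgeFinset.1 he) hne
        have hw := Finset.mem_Icc.1 hpw
        refine ⟨p, Finset.mem_filter.2 ⟨hp, hpe, hplab, Finset.mem_Icc.2 ⟨?_, ?_⟩⟩, hplab, hpw⟩
        · omega
        · omega
    calc (G.edgeFinset.biUnion s').card
        ≤ ∑ e ∈ G.edgeFinset, (s' e).card := Finset.card_biUnion_le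
      _ ≤ ∑ e ∈ G.edgeFinset,
            (Sstar.filter (fun p => p.1 ∈ e ∧ p.2 ∈ lab e ∧ p.2 ∈ Finset.Icc 1 T)).card :=
          Finset.sum_le_sum key
      _ = ∑ p ∈ Sstar,
            (G.edgeFinset.filter (fun e => p.1 ∈ e ∧ p.2 ∈ lab e ∧ p.2 ∈ Finset.Icc 1 T)).card := by
          simp only [Finset.card_filter]
          exact Finset.sum_comm
      _ ≤ ∑ _p ∈ Sstar, d := by
          refine Finset.sum_le_sum fun p _ => ?_
          by_cases h : p.2 ∈ Finset.Icc 1 T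
          · refine le_trans (Finset.card_le_card ?_) (hdeg p.2 h p.1)
            intro e he
            simp only [Finset.mem_filter] at he ⊢
            exact ⟨he.1, he.2.1, he.2.2.1⟩
          · have : (G.edgeFinset.filter
                (fun e => p.1 ∈ e ∧ p.2 ∈ lab e ∧ p.2 ∈ Finset.Icc 1 T)) = ∅ := by
              refine Finset.filter_false_of_mem fun e _ => ?_
              tauto
            rw [this, Finset.card_empty]; exact Nat.zero_le d
      _ = Sstar.card * d := by simp [Finset.sum_const, Nat.smul_one_eq_cast]
      _ = d * Sstar.card := Nat.mul_comm _ _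
end

section
/- If every snapshot of a temporal graph (G,λ) has maximum degree at most 1 (i.e., every snapshot is a matching), then the union over all edges e = uv of minimum-cardinality sliding Δ-window temporal vertex covers of the single-edge temporal graphs (G[{u,v}],λ) is a minimum-cardinality sliding Δ-window temporal vertex cover of (G,λ). -/
/-- If every snapshot of `(G,λ)` is a matching (maximum degree at most `1`), then the
union over all edges `e` of minimum-cardinality sliding `Δ`-window temporal vertex
covers of the single-edge temporal graphs induced by `e` is a minimum-cardinality
sliding `Δ`-window temporal vertex cover of `(G,λ)`. -/
theorem stmt10 {V : Type*} [Fintype V] [DecidableEq V] (G : SimpleGraph V)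
    [DecidableRel G.Adj] (lab : Sym2 V → Finset ℕ) (T Δ : ℕ)
    (hΔ1 : 1 ≤ Δ) (hΔT : Δ ≤ T)
    (hmatching : ∀ t ∈ Finset.Icc 1 T, ∀ v : V,
        (G.edgeFinset.filter (fun e => v ∈ e ∧ t ∈ lab e)).card ≤ 1)
    (s' : Sym2 V → Finset (V × ℕ))
    (hs'mem : ∀ e ∈ G.edgeFinset, ∀ p ∈ s' e, p.1 ∈ e ∧ p.2 ∈ Finset.Icc 1 T)
    (hs'cov : ∀ e ∈ G.edgeFinset, ∀ t, 1 ≤ t → t ≤ T - Δ + 1 →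
        (lab e ∩ Finset.Icc t (t + Δ - 1)).Nonempty →
        ∃ p ∈ s' e, p.2 ∈ lab e ∧ p.2 ∈ Finset.Icc t (t + Δ - 1))
    (hs'min : ∀ e ∈ G.edgeFinset, ∀ S'' : Finset (V × ℕ),
        (∀ p ∈ S'', p.1 ∈ e ∧ p.2 ∈ Finset.Icc 1 T) →
        (∀ t, 1 ≤ t → t ≤ T - Δ + 1 → (lab e ∩ Finset.Icc t (t + Δ - 1)).Nonempty →
          ∃ p ∈ S'', p.2 ∈ lab e ∧ p.2 ∈ Finset.Icc t (t + Δ - 1)) →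
        (s' e).card ≤ S''.card) :
    SWTVC G lab T Δ (G.edgeFinset.biUnion s') ∧
    ∀ S'' : Finset (V × ℕ), SWTVC G lab T Δ S'' →
      (G.edgeFinset.biUnion s').card ≤ S''.card := by
  constructor
  · intro t ht1 ht2 e he hne
    have he' : e ∈ G.edgeFinset := by rwa [SimpleGraph.mem_edgeFinset]
    obtain ⟨p, hp, hpl, hpw⟩ := hs'cov e he' t ht1 ht2 hne
    exact ⟨p, Finset.mem_biUnion.2 ⟨e, he', hp⟩, (hs'mem e he' p hp).1, hpl, hpw⟩
  · intro S'' hS''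
    set f : Sym2 V → Finset (V × ℕ) :=
      fun e => S''.filter (fun p => p.1 ∈ e ∧ p.2 ∈ lab e ∧ p.2 ∈ Finset.Icc 1 T) with hf
    have hsub : ∀ e ∈ G.edgeFinset, (s' e).card ≤ (f e).card := by
      intro e he
      apply hs'min e he
      · intro p hp
        rw [hf, Finset.mem_filter] at hp
        exact ⟨hp.2.1, hp.2.2.2⟩
      · intro t ht1 ht2 hne
        have he' : e ∈ G.edgeSet := by rwa [← SimpleGraph.mem_edgeFinset]
        obtain ⟨p, hp, hp1, hp2, hp3⟩ := hS'' t ht1 ht2 e he' hne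
        have hpT : p.2 ∈ Finset.Icc 1 T := by
          simp only [Finset.mem_Icc] at hp3 ⊢
          omega
        exact ⟨p, Finset.mem_filter.2 ⟨hp, hp1, hp2, hpT⟩, hp2, hp3⟩
    have hdisj : ∀ e₁ ∈ G.edgeFinset, ∀ e₂ ∈ G.edgeFinset, e₁ ≠ e₂ →
        Disjoint (f e₁) (f e₂) := by
      intro e₁ he₁ e₂ he₂ hne
      rw [Finset.disjoint_left]
      intro p hp1 hp2
      rw [hf, Finset.mem_filter] at hp1 hp2
      have h := hmatching p.2 hp1.2.2.2 p.1
      have hcard : 2 ≤ (G.edgeFinset.filter (fun e => p.1 ∈ e ∧ p.2 ∈ lab e)).card := by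
        apply Finset.one_lt_card.2
        exact ⟨e₁, Finset.mem_filter.2 ⟨he₁, hp1.2.1, hp1.2.2.1⟩,
               e₂, Finset.mem_filter.2 ⟨he₂, hp2.2.1, hp2.2.2.1⟩, hne⟩
      omega
    calc (G.edgeFinset.biUnion s').card
        ≤ ∑ e ∈ G.edgeFinset, (s' e).card := Finset.card_biUnion_le
      _ ≤ ∑ e ∈ G.edgeFinset, (f e).card := Finset.sum_le_sum hsub
      _ = (G.edgeFinset.biUnion f).card := (Finset.card_biUnion hdisj).symm
      _ ≤ S''.card := Finset.card_le_card (Finset.biUnion_subset.2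
            fun e _ => Finset.filter_subset _ _)
end

section
/- Let H = (V,E) be a graph in which every vertex has degree 2 or 3, such that H is obtained from a cubic graph by subdividing each edge exactly 4 times. Let R ⊆ V be the set of degree-3 vertices. Define a temporal graph (G,λ) with lifetime 2 whose snapshot G₁ is H minus all edges whose both endpoints are at distance exactly 2 from R, and whose snapshot G₂ equals H − R (delete vertices of R and incident edges). Then the minimum size of a vertex cover of H equals the minimum cardinality of a sliding 2-window temporal vertex cover of (G,λ). -/
/-- The 4-subdivision `H` of `G`. -/
noncomputable def subdiv4 {V : Type*} [Fintype V] [DecidableEq V] (G : SimpleGraph V)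
    [DecidableRel G.Adj] :
    SimpleGraph (V ⊕ ({e : Sym2 V // e ∈ G.edgeFinset} × Fin 4)) :=
  SimpleGraph.fromEdgeSet (subdiv4Edges G)

/-- The set `R` of degree-3 vertices of `H`. -/
noncomputable def degThree {V : Type*} [Fintype V] [DecidableEq V] (G : SimpleGraph V)
    [DecidableRel G.Adj] : Set (V ⊕ ({e : Sym2 V // e ∈ G.edgeFinset} × Fin 4)) :=
  {w | ((subdiv4 G).neighborSet w).ncard = 3}

/-- The distance in `H` from a vertex `w` to the set `R` of degree-3 vertices:
the minimum graph distance to a vertex of `R`. -/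
noncomputable def distToR {V : Type*} [Fintype V] [DecidableEq V] (G : SimpleGraph V)
    [DecidableRel G.Adj] (w : V ⊕ ({e : Sym2 V // e ∈ G.edgeFinset} × Fin 4)) : ℕ :=
  sInf {n | ∃ r ∈ degThree G, (subdiv4 G).dist w r = n}

/-- Snapshot 1: the edges of `H` except those whose both endpoints are at distance
exactly 2 from `R`. -/
noncomputable def snap1 {V : Type*} [Fintype V] [DecidableEq V] (G : SimpleGraph V)
    [DecidableRel G.Adj] : Set (Sym2 (V ⊕ ({e : Sym2 V // e ∈ G.edgeFinset} × Fin 4))) :=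
  {e ∈ (subdiv4 G).edgeSet | ¬ ∀ w ∈ e, distToR G w = 2}

/-- Snapshot 2: the edges of `H - R`, i.e. the edges of `H` having no endpoint in `R`. -/
noncomputable def snap2 {V : Type*} [Fintype V] [DecidableEq V] (G : SimpleGraph V)
    [DecidableRel G.Adj] : Set (Sym2 (V ⊕ ({e : Sym2 V // e ∈ G.edgeFinset} × Fin 4))) :=
  {e ∈ (subdiv4 G).edgeSet | ∀ w ∈ e, w ∉ degThree G}

/-- `S` is a sliding 2-window temporal vertex cover of the lifetime-2 temporal graph
with snapshots `snap1 G`, `snap2 G`: every edge of `E(G₁) ∪ E(G₂)` is covered by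
a vertex appearance at a time slot where it is active. -/
noncomputable def Cover2 {V : Type*} [Fintype V] [DecidableEq V] (G : SimpleGraph V)
    [DecidableRel G.Adj]
    (S : Finset ((V ⊕ ({e : Sym2 V // e ∈ G.edgeFinset} × Fin 4)) × ℕ)) : Prop :=
  ∀ e ∈ snap1 G ∪ snap2 G, ∃ p ∈ S, p.1 ∈ e ∧
    ((p.2 = 1 ∧ e ∈ snap1 G) ∨ (p.2 = 2 ∧ e ∈ snap2 G))

section Aux

open Sum SimpleGraph

variable {V : Type*} [Fintype V] [DecidableEq V] (G : SimpleGraph V) [DecidableRel G.Adj]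

set_option linter.unusedSectionVars false

private lemma nbr_inr0 (e : {e : Sym2 V // e ∈ G.edgeFinset}) :
    (subdiv4 G).neighborSet (inr (e,0)) = {inl (Quot.out e.1).1, inr (e,1)} := by
  ext b
  simp only [SimpleGraph.mem_neighborSet, subdiv4, SimpleGraph.fromEdgeSet_adj,
    subdiv4Edges, Set.mem_iUnion, Set.mem_insert_iff, Set.mem_singleton_iff, Sym2.eq_iff]
  constructor
  · rintro ⟨⟨e', h⟩, hne⟩
    rcases h with (⟨h1,h2⟩|⟨h1,h2⟩)|(⟨h1,h2⟩|⟨h1,h2⟩)|(⟨h1,h2⟩|⟨h1,h2⟩)|(⟨h1,h2⟩|⟨h1,h2⟩)|(⟨h1,h2⟩|⟨h1,h2⟩) <;>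
      simp_all
  · rintro (rfl|rfl)
    · exact ⟨⟨e, by simp⟩, by simp⟩
    · exact ⟨⟨e, by simp⟩, by simp⟩

private lemma nbr_inr1 (e : {e : Sym2 V // e ∈ G.edgeFinset}) :
    (subdiv4 G).neighborSet (inr (e,1)) = {inr (e,0), inr (e,2)} := by
  ext b
  simp only [SimpleGraph.mem_neighborSet, subdiv4, SimpleGraph.fromEdgeSet_adj,
    subdiv4Edges, Set.mem_iUnion, Set.mem_insert_iff, Set.mem_singleton_iff, Sym2.eq_iff]
  constructor
  · rintro ⟨⟨e', h⟩, hne⟩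
    rcases h with (⟨h1,h2⟩|⟨h1,h2⟩)|(⟨h1,h2⟩|⟨h1,h2⟩)|(⟨h1,h2⟩|⟨h1,h2⟩)|(⟨h1,h2⟩|⟨h1,h2⟩)|(⟨h1,h2⟩|⟨h1,h2⟩) <;>
      simp_all
  · rintro (rfl|rfl)
    · exact ⟨⟨e, by simp⟩, by simp⟩
    · exact ⟨⟨e, by simp⟩, by simp⟩

private lemma nbr_inr2 (e : {e : Sym2 V // e ∈ G.edgeFinset}) :
    (subdiv4 G).neighborSet (inr (e,2)) = {inr (e,1), inr (e,3)} := by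
  ext b
  simp only [SimpleGraph.mem_neighborSet, subdiv4, SimpleGraph.fromEdgeSet_adj,
    subdiv4Edges, Set.mem_iUnion, Set.mem_insert_iff, Set.mem_singleton_iff, Sym2.eq_iff]
  constructor
  · rintro ⟨⟨e', h⟩, hne⟩
    rcases h with (⟨h1,h2⟩|⟨h1,h2⟩)|(⟨h1,h2⟩|⟨h1,h2⟩)|(⟨h1,h2⟩|⟨h1,h2⟩)|(⟨h1,h2⟩|⟨h1,h2⟩)|(⟨h1,h2⟩|⟨h1,h2⟩) <;>
      simp_all
  · rintro (rfl|rfl)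
    · exact ⟨⟨e, by simp⟩, by simp⟩
    · exact ⟨⟨e, by simp⟩, by simp⟩

private lemma nbr_inr3 (e : {e : Sym2 V // e ∈ G.edgeFinset}) :
    (subdiv4 G).neighborSet (inr (e,3)) = {inr (e,2), inl (Quot.out e.1).2} := by
  ext b
  simp only [SimpleGraph.mem_neighborSet, subdiv4, SimpleGraph.fromEdgeSet_adj,
    subdiv4Edges, Set.mem_iUnion, Set.mem_insert_iff, Set.mem_singleton_iff, Sym2.eq_iff]
  constructor
  · rintro ⟨⟨e', h⟩, hne⟩
    rcases h with (⟨h1,h2⟩|⟨h1,h2⟩)|(⟨h1,h2⟩|⟨h1,h2⟩)|(⟨h1,h2⟩|⟨h1,h2⟩)|(⟨h1,h2⟩|⟨h1,h2⟩)|(⟨h1,h2⟩|⟨h1,h2⟩) <;>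
      simp_all
  · rintro (rfl|rfl)
    · exact ⟨⟨e, by simp⟩, by simp⟩
    · exact ⟨⟨e, by simp⟩, by simp⟩

private lemma out_spec (e : Sym2 V) : s((Quot.out e).1, (Quot.out e).2) = e := by
  rw [Sym2.mk]; exact Quot.out_eq e

private lemma out_ne (e : Sym2 V) (he : e ∈ G.edgeSet) :
    (Quot.out e).1 ≠ (Quot.out e).2 := by
  intro h
  have hd : e.IsDiag := by
    rw [← e.out_eq]
    exact h
  exact G.not_isDiag_of_mem_edgeSet he hd

private lemma nbr_inl (v : V) :
    (subdiv4 G).neighborSet (inl v) =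
      (fun e : {e : Sym2 V // e ∈ G.edgeFinset} =>
          (inr (e, if (Quot.out e.1).1 = v then (0 : Fin 4) else 3) :
            V ⊕ ({e : Sym2 V // e ∈ G.edgeFinset} × Fin 4))) ''
        {e : {e : Sym2 V // e ∈ G.edgeFinset} | v ∈ e.1} := by
  ext b
  simp only [SimpleGraph.mem_neighborSet, subdiv4, SimpleGraph.fromEdgeSet_adj,
    subdiv4Edges, Set.mem_iUnion, Set.mem_insert_iff, Set.mem_singleton_iff, Sym2.eq_iff,
    Set.mem_image, Set.mem_setOf_eq]
  constructor
  · rintro ⟨⟨e', h⟩, hne⟩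
    rcases h with (⟨h1,h2⟩|⟨h1,h2⟩)|(⟨h1,h2⟩|⟨h1,h2⟩)|(⟨h1,h2⟩|⟨h1,h2⟩)|(⟨h1,h2⟩|⟨h1,h2⟩)|(⟨h1,h2⟩|⟨h1,h2⟩)
    · have hv : v = (Quot.out e'.1).1 := by injection h1
      refine ⟨e', by rw [hv]; exact Sym2.out_fst_mem _, ?_⟩
      rw [if_pos hv.symm, h2]
    · simp_all
    · simp_all
    · simp_all
    · simp_all
    · simp_all
    · simp_all
    · simp_all
    · simp_all
    · have hv : v = (Quot.out e'.1).2 := by injection h1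
      have hne1 : ¬ (Quot.out e'.1).1 = v := by
        intro h
        exact out_ne G e'.1 (SimpleGraph.mem_edgeFinset.mp e'.2) (h.trans hv)
      refine ⟨e', by rw [hv]; exact Sym2.out_snd_mem _, ?_⟩
      rw [if_neg hne1, h2]
  · rintro ⟨e, he, rfl⟩
    by_cases hc : (Quot.out e.1).1 = v
    · refine ⟨⟨e, ?_⟩, by simp⟩
      rw [if_pos hc]
      simp [hc]
    · have hv : v = (Quot.out e.1).2 := by
        rw [← out_spec e.1] at he
        rcases Sym2.mem_iff.mp he with h | h
        · exact absurd h.symm hc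
        · exact h
      refine ⟨⟨e, ?_⟩, by simp [hc]⟩
      rw [if_neg hc]
      simp [hv]

private lemma inr_not_degThree (e : {e : Sym2 V // e ∈ G.edgeFinset}) (i : Fin 4) :
    inr (e, i) ∉ degThree G := by
  intro h
  simp only [degThree, Set.mem_setOf_eq] at h
  fin_cases i
  · have h' : ((subdiv4 G).neighborSet (inr (e, (0 : Fin 4)))).ncard = 3 := h
    rw [nbr_inr0, Set.ncard_pair (by simp)] at h'; omega
  · have h' : ((subdiv4 G).neighborSet (inr (e, (1 : Fin 4)))).ncard = 3 := h
    rw [nbr_inr1, Set.ncard_pair (by simp)] at h'; omega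
  · have h' : ((subdiv4 G).neighborSet (inr (e, (2 : Fin 4)))).ncard = 3 := h
    rw [nbr_inr2, Set.ncard_pair (by simp)] at h'; omega
  · have h' : ((subdiv4 G).neighborSet (inr (e, (3 : Fin 4)))).ncard = 3 := h
    rw [nbr_inr3, Set.ncard_pair (by simp)] at h'; omega

private lemma inl_degThree (hcubic : ∀ v : V, G.degree v = 3) (v : V) :
    (inl v : V ⊕ ({e : Sym2 V // e ∈ G.edgeFinset} × Fin 4)) ∈ degThree G := by
  simp only [degThree, Set.mem_setOf_eq, nbr_inl]
  have hginj : Function.Injective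
      (fun e : {e : Sym2 V // e ∈ G.edgeFinset} =>
        (inr (e, if (Quot.out e.1).1 = v then (0 : Fin 4) else 3) :
          V ⊕ ({e : Sym2 V // e ∈ G.edgeFinset} × Fin 4))) := by
    intro a b h
    simp only [Sum.inr.injEq, Prod.mk.injEq] at h
    exact h.1
  rw [Set.ncard_image_of_injective _ hginj]
  have hval : Subtype.val '' {e : {e : Sym2 V // e ∈ G.edgeFinset} | v ∈ e.1} =
      (G.incidenceFinset v : Set (Sym2 V)) := by
    ext f
    simp only [Set.mem_image, Set.mem_setOf_eq, Finset.coe_sort_coe, Finset.mem_coe,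
      SimpleGraph.mem_incidenceFinset, SimpleGraph.incidenceSet, Set.mem_setOf_eq,
      Set.mem_sep_iff]
    constructor
    · rintro ⟨⟨e, he⟩, hv, rfl⟩
      exact ⟨SimpleGraph.mem_edgeFinset.mp he, hv⟩
    · rintro ⟨hf, hv⟩
      exact ⟨⟨f, SimpleGraph.mem_edgeFinset.mpr hf⟩, hv, rfl⟩
  calc ({e : {e : Sym2 V // e ∈ G.edgeFinset} | v ∈ e.1}).ncard
      = (Subtype.val '' {e : {e : Sym2 V // e ∈ G.edgeFinset} | v ∈ e.1}).ncard :=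
        (Set.ncard_image_of_injective _ Subtype.val_injective).symm
    _ = (G.incidenceFinset v).card := by rw [hval, Set.ncard_coe_finset]
    _ = 3 := by rw [SimpleGraph.card_incidenceFinset_eq_degree]; exact hcubic v

private lemma degThree_distToR_zero {w : V ⊕ ({e : Sym2 V // e ∈ G.edgeFinset} × Fin 4)}
    (hw : w ∈ degThree G) : distToR G w = 0 :=
  Nat.sInf_eq_zero.2 (Or.inl ⟨w, hw, SimpleGraph.dist_self⟩)

private lemma distToR_inl (hcubic : ∀ v : V, G.degree v = 3) (v : V) :
    distToR G (inl v : V ⊕ ({e : Sym2 V // e ∈ G.edgeFinset} × Fin 4)) = 0 :=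
  degThree_distToR_zero G (inl_degThree G hcubic v)

private lemma adj_inr0 (e : {e : Sym2 V // e ∈ G.edgeFinset}) :
    (subdiv4 G).Adj (inr (e,0)) (inl (Quot.out e.1).1) := by
  have : (inl (Quot.out e.1).1 : V ⊕ ({e : Sym2 V // e ∈ G.edgeFinset} × Fin 4)) ∈
      (subdiv4 G).neighborSet (inr (e,0)) := by
    rw [nbr_inr0]; exact Set.mem_insert _ _
  exact this

private lemma adj_inr3 (e : {e : Sym2 V // e ∈ G.edgeFinset}) :
    (subdiv4 G).Adj (inr (e,3)) (inl (Quot.out e.1).2) := by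
  have : (inl (Quot.out e.1).2 : V ⊕ ({e : Sym2 V // e ∈ G.edgeFinset} × Fin 4)) ∈
      (subdiv4 G).neighborSet (inr (e,3)) := by
    rw [nbr_inr3]; exact Set.mem_insert_of_mem _ rfl
  exact this

private lemma distToR_le_one_of_adj {w r : V ⊕ ({e : Sym2 V // e ∈ G.edgeFinset} × Fin 4)}
    (hr : r ∈ degThree G) (h : (subdiv4 G).Adj w r) : distToR G w ≤ 1 :=
  Nat.sInf_le ⟨r, hr, SimpleGraph.dist_eq_one_iff_adj.mpr h⟩

/-- The time assignment. -/
private def tmv {V : Type*} [Fintype V] [DecidableEq V] (G : SimpleGraph V)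
    [DecidableRel G.Adj] : (V ⊕ ({e : Sym2 V // e ∈ G.edgeFinset} × Fin 4)) → ℕ :=
  Sum.elim (fun _ => 1) (fun p => if p.2 = 1 ∨ p.2 = 2 then 2 else 1)

private lemma edge_mem_union {f : Sym2 (V ⊕ ({e : Sym2 V // e ∈ G.edgeFinset} × Fin 4))}
    (hf : f ∈ (subdiv4 G).edgeSet) : f ∈ snap1 G ∪ snap2 G := by
  by_cases h : f ∈ snap1 G
  · exact Or.inl h
  · right
    refine ⟨hf, fun w hw hdeg => ?_⟩
    have h2 : ∀ w ∈ f, distToR G w = 2 := by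
      by_contra hc
      exact h ⟨hf, hc⟩
    have := h2 w hw
    rw [degThree_distToR_zero G hdeg] at this
    omega

private lemma cover2_core (hcubic : ∀ v : V, G.degree v = 3)
    (c b : V ⊕ ({e : Sym2 V // e ∈ G.edgeFinset} × Fin 4))
    (hadj : (subdiv4 G).Adj c b) :
    (tmv G c = 1 ∧ s(c,b) ∈ snap1 G) ∨ (tmv G c = 2 ∧ s(c,b) ∈ snap2 G) := by
  have hfe : s(c,b) ∈ (subdiv4 G).edgeSet := hadj
  rcases c with v | ⟨e, i⟩
  · refine Or.inl ⟨rfl, hfe, fun hall => ?_⟩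
    have := hall (inl v) (Sym2.mem_mk_left _ _)
    rw [distToR_inl G hcubic] at this
    omega
  · fin_cases i
    · refine Or.inl ⟨rfl, hfe, fun hall => ?_⟩
      have h1 := hall (inr (e, 0)) (Sym2.mem_mk_left _ _)
      have h2 := distToR_le_one_of_adj G (inl_degThree G hcubic _) (adj_inr0 G e)
      omega
    · refine Or.inr ⟨rfl, hfe, fun w hw => ?_⟩
      rcases Sym2.mem_iff.mp hw with rfl | rfl
      · exact inr_not_degThree G e 1
      · have hb : w ∈ (subdiv4 G).neighborSet (inr (e, (1 : Fin 4))) := hadj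
        rw [nbr_inr1] at hb
        rcases hb with rfl | rfl
        · exact inr_not_degThree G e 0
        · exact inr_not_degThree G e 2
    · refine Or.inr ⟨rfl, hfe, fun w hw => ?_⟩
      rcases Sym2.mem_iff.mp hw with rfl | rfl
      · exact inr_not_degThree G e 2
      · have hb : w ∈ (subdiv4 G).neighborSet (inr (e, (2 : Fin 4))) := hadj
        rw [nbr_inr2] at hb
        rcases hb with rfl | rfl
        · exact inr_not_degThree G e 1
        · exact inr_not_degThree G e 3
    · refine Or.inl ⟨rfl, hfe, fun hall => ?_⟩
      have h1 := hall (inr (e, 3)) (Sym2.mem_mk_left _ _)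
      have h2 := distToR_le_one_of_adj G (inl_degThree G hcubic _) (adj_inr3 G e)
      omega

private lemma exists_cover_of_cover2
    (S : Finset ((V ⊕ ({e : Sym2 V // e ∈ G.edgeFinset} × Fin 4)) × ℕ)) (hS : Cover2 G S) :
    ∃ C : Finset (V ⊕ ({e : Sym2 V // e ∈ G.edgeFinset} × Fin 4)),
      (∀ e ∈ (subdiv4 G).edgeSet, ∃ w ∈ C, w ∈ e) ∧ C.card ≤ S.card := by
  refine ⟨S.image Prod.fst, fun f hf => ?_, Finset.card_image_le⟩
  obtain ⟨p, hp, hpf, _⟩ := hS f (edge_mem_union G hf)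
  exact ⟨p.1, Finset.mem_image_of_mem _ hp, hpf⟩

private lemma exists_cover2_of_cover (hcubic : ∀ v : V, G.degree v = 3)
    (C : Finset (V ⊕ ({e : Sym2 V // e ∈ G.edgeFinset} × Fin 4)))
    (hC : ∀ e ∈ (subdiv4 G).edgeSet, ∃ w ∈ C, w ∈ e) :
    ∃ S : Finset ((V ⊕ ({e : Sym2 V // e ∈ G.edgeFinset} × Fin 4)) × ℕ),
      Cover2 G S ∧ S.card = C.card := by
  refine ⟨C.image (fun c => (c, tmv G c)), ?_,
    Finset.card_image_of_injective _ (fun a b h => congrArg Prod.fst h)⟩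
  intro f hf
  have hfe : f ∈ (subdiv4 G).edgeSet := by
    rcases hf with h | h
    · exact h.1
    · exact h.1
  obtain ⟨c, hcC, hcf⟩ := hC f hfe
  revert hcf hfe hf
  induction f using Sym2.ind with
  | _ a b =>
    intro hf hfe hcf
    have hab : (subdiv4 G).Adj a b := hfe
    rcases Sym2.mem_iff.mp hcf with rfl | rfl
    · rcases cover2_core G hcubic c b hab with ⟨h1, h2⟩ | ⟨h1, h2⟩
      · exact ⟨(c, tmv G c), Finset.mem_image_of_mem _ hcC, Sym2.mem_mk_left _ _,
          Or.inl ⟨h1, h2⟩⟩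
      · exact ⟨(c, tmv G c), Finset.mem_image_of_mem _ hcC, Sym2.mem_mk_left _ _,
          Or.inr ⟨h1, h2⟩⟩
    · have hswap : s(a, c) = s(c, a) := Sym2.eq_swap
      rcases cover2_core G hcubic c a hab.symm with ⟨h1, h2⟩ | ⟨h1, h2⟩
      · exact ⟨(c, tmv G c), Finset.mem_image_of_mem _ hcC, Sym2.mem_mk_right _ _,
          Or.inl ⟨h1, hswap ▸ h2⟩⟩
      · exact ⟨(c, tmv G c), Finset.mem_image_of_mem _ hcC, Sym2.mem_mk_right _ _,
          Or.inr ⟨h1, hswap ▸ h2⟩⟩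

end Aux

/-- Let `H` be the 4-subdivision of a cubic graph `G`. Then the vertex cover number
of `H` equals the minimum cardinality of a sliding 2-window temporal vertex cover of
the lifetime-2 temporal graph whose first snapshot is `H` minus the edges with both
endpoints at distance exactly 2 from the set `R` of degree-3 vertices, and whose
second snapshot is `H - R`. -/
theorem stmt11 {V : Type*} [Fintype V] [DecidableEq V] (G : SimpleGraph V)
    [DecidableRel G.Adj] (hcubic : ∀ v : V, G.degree v = 3) :
    vcNum (subdiv4 G) =
      sInf {n | ∃ S : Finset ((V ⊕ ({e : Sym2 V // e ∈ G.edgeFinset} × Fin 4)) × ℕ),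
        Cover2 G S ∧ S.card = n} := by
  classical
  have huniv : ∀ e ∈ (subdiv4 G).edgeSet, ∃ w ∈ (Finset.univ :
      Finset (V ⊕ ({e : Sym2 V // e ∈ G.edgeFinset} × Fin 4))), w ∈ e := by
    intro f _
    induction f using Sym2.ind with
    | _ a b => exact ⟨a, Finset.mem_univ a, Sym2.mem_mk_left a b⟩
  apply le_antisymm
  · have hBne : {n | ∃ S : Finset ((V ⊕ ({e : Sym2 V // e ∈ G.edgeFinset} × Fin 4)) × ℕ),
        Cover2 G S ∧ S.card = n}.Nonempty := by
      obtain ⟨S, hS, hcard⟩ := exists_cover2_of_cover G hcubic Finset.univ huniv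
      exact ⟨S.card, S, hS, rfl⟩
    obtain ⟨S, hS, hcard⟩ := Nat.sInf_mem hBne
    obtain ⟨C, hC, hle⟩ := exists_cover_of_cover2 G S hS
    calc vcNum (subdiv4 G) ≤ C.card := Nat.sInf_le ⟨C, hC, rfl⟩
      _ ≤ S.card := hle
      _ = _ := hcard
  · have hAne : {n | ∃ C : Finset (V ⊕ ({e : Sym2 V // e ∈ G.edgeFinset} × Fin 4)),
        (∀ e ∈ (subdiv4 G).edgeSet, ∃ w ∈ C, w ∈ e) ∧ C.card = n}.Nonempty :=
      ⟨Finset.univ.card, Finset.univ, huniv, rfl⟩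
    obtain ⟨C, hC, hcard⟩ := Nat.sInf_mem hAne
    obtain ⟨S, hS, hcards⟩ := exists_cover2_of_cover G hcubic C hC
    refine le_trans (Nat.sInf_le ⟨S, hS, rfl⟩) ?_
    rw [hcards]
    exact le_of_eq hcard
end

section
/- Let (G,λ) be a temporal graph with lifetime T and Δ ≤ T, and let k be the maximum Δ-frequency over all edges, i.e., k = max over edges e and time windows W_t of |λ(e) ∩ W_t|. In the Set Cover reduction with universe U and sets C_{v,s} as defined, every element (e,t) ∈ U belongs to at most 2k of the sets C_{v,s}. -/
/-- Let `k` bound the `Δ`-frequency of every edge (the number of appearances of the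
edge within any `Δ`-window). Then in the Set Cover reduction for SW-TVC, every element
`(e,t)` of the universe belongs to at most `2k` of the sets `C_{v,s}`. -/
theorem stmt14 {V : Type*} [Fintype V] [DecidableEq V] (G : SimpleGraph V)
    (lab : Sym2 V → Finset ℕ) (T Δ k : ℕ) (hΔ1 : 1 ≤ Δ) (hΔT : Δ ≤ T)
    (hk : ∀ e ∈ G.edgeSet, ∀ t ∈ Finset.Icc 1 (T - Δ + 1),
        (lab e ∩ Finset.Icc t (t + Δ - 1)).card ≤ k)
    (e : Sym2 V) (t : ℕ) (he : e ∈ G.edgeSet) (ht : t ∈ Finset.Icc 1 (T - Δ + 1))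
    (hU : (lab e ∩ Finset.Icc t (t + Δ - 1)).Nonempty) :
    ((Finset.univ ×ˢ Finset.Icc 1 T).filter
      (fun p : V × ℕ => p.1 ∈ e ∧ p.2 ∈ lab e ∧ p.2 ∈ Finset.Icc t (t + Δ - 1))).card
      ≤ 2 * k := by
  obtain ⟨a, b⟩ := e
  have hsub : ((Finset.univ ×ˢ Finset.Icc 1 T).filter
      (fun p : V × ℕ => p.1 ∈ s(a, b) ∧ p.2 ∈ lab s(a, b) ∧
        p.2 ∈ Finset.Icc t (t + Δ - 1))) ⊆
      ({a, b} : Finset V) ×ˢ (lab s(a, b) ∩ Finset.Icc t (t + Δ - 1)) := by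
    intro p hp
    simp only [Finset.mem_filter, Finset.mem_product, Sym2.mem_iff, Finset.mem_inter,
      Finset.mem_insert, Finset.mem_singleton] at *
    tauto
  calc _ ≤ (({a, b} : Finset V) ×ˢ (lab s(a, b) ∩ Finset.Icc t (t + Δ - 1))).card :=
        Finset.card_le_card hsub
    _ = ({a, b} : Finset V).card * (lab s(a, b) ∩ Finset.Icc t (t + Δ - 1)).card :=
        Finset.card_product _ _
    _ ≤ 2 * k := by
        exact Nat.mul_le_mul (Finset.card_insert_le _ _ |>.trans (by simp))
          (hk _ he _ ht)
end

section
/- Let (G,λ) be a temporal graph with lifetime T and Δ such that T is a multiple of Δ. Construct (G,λ') of lifetime T' = T + ⌊T/Δ⌋ by inserting one edgeless snapshot after every Δ consecutive snapshots of (G,λ) (i.e., the snapshot of (G,λ') at time t is edgeless if t ≡ 0 mod (Δ+1), and otherwise equals the snapshot of (G,λ) at time t − ⌊t/(Δ+1)⌋). Then the minimum cardinality of a sliding (Δ+1)-window temporal vertex cover of (G,λ') equals the minimum cardinality of a sliding Δ-window temporal vertex cover of (G,λ). -/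
/- Auxiliary arithmetic about the time map `φ t = t + (t-1)/Δ` (which bijects
`[1,T]` with the non-multiples of `Δ+1`) and its inverse `ψ s = s - s/(Δ+1)`. -/

private lemma tmap_decomp {Δ t : ℕ} (hΔ : 1 ≤ Δ) (ht : 1 ≤ t) :
    ∃ q r, 1 ≤ r ∧ r ≤ Δ ∧ t = Δ * q + r ∧ t + (t - 1) / Δ = Δ * q + q + r := by
  have h1 := Nat.div_add_mod (t - 1) Δ
  have h2 : (t - 1) % Δ < Δ := Nat.mod_lt _ (by omega)
  exact ⟨(t - 1) / Δ, (t - 1) % Δ + 1, by omega, by omega, by omega, by omega⟩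

private lemma div_eq_q {Δ q r : ℕ} (hr1 : 1 ≤ r) (hr2 : r ≤ Δ) :
    (Δ * q + q + r) / (Δ + 1) = q := by
  have h : Δ * q + q + r = (Δ + 1) * q + r := by ring
  rw [h, Nat.mul_add_div (by omega : 0 < Δ + 1), Nat.div_eq_of_lt (by omega), add_zero]

private lemma nondvd_decomp {Δ s : ℕ} (hs : ¬ (Δ + 1) ∣ s) :
    ∃ q r, 1 ≤ r ∧ r ≤ Δ ∧ s = Δ * q + q + r ∧ s - s / (Δ + 1) = Δ * q + r := by
  have h1 := Nat.div_add_mod s (Δ + 1)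
  have h2 : s % (Δ + 1) < Δ + 1 := Nat.mod_lt _ (by omega)
  have h3 : s % (Δ + 1) ≠ 0 := fun h => hs (Nat.dvd_of_mod_eq_zero h)
  have h4 : (Δ + 1) * (s / (Δ + 1)) = Δ * (s / (Δ + 1)) + s / (Δ + 1) := by ring
  exact ⟨s / (Δ + 1), s % (Δ + 1), by omega, by omega, by omega, by omega⟩

/-- Basic properties of `φ s = s + (s-1)/Δ` for `1 ≤ s ≤ Δ*k`. -/
private lemma tmap_props {Δ s k : ℕ} (hΔ : 1 ≤ Δ) (h1 : 1 ≤ s) (h2 : s ≤ Δ * k) :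
    1 ≤ s + (s - 1) / Δ ∧ s + (s - 1) / Δ ≤ Δ * k + k ∧
      ¬ (Δ + 1) ∣ (s + (s - 1) / Δ) ∧
      (s + (s - 1) / Δ) - (s + (s - 1) / Δ) / (Δ + 1) = s := by
  obtain ⟨q, r, hr1, hr2, hsq, hsm⟩ := tmap_decomp hΔ h1
  have hdiv : (s + (s - 1) / Δ) / (Δ + 1) = q := by rw [hsm]; exact div_eq_q hr1 hr2
  refine ⟨by omega, ?_, ?_, by omega⟩
  · have hqk : q + 1 ≤ k := by
      by_contra hc
      have := Nat.mul_le_mul_left Δ (show k ≤ q by omega)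
      omega
    omega
  · rintro ⟨c, hc⟩
    have hb : (Δ + 1) * c = Δ * c + c := by ring
    rcases le_or_gt c q with h | h
    · have := Nat.mul_le_mul_left Δ h
      omega
    · have := Nat.mul_le_mul_left Δ (show q + 1 ≤ c by omega)
      have hb2 : Δ * (q + 1) = Δ * q + Δ := by ring
      omega

/-- For every window start `t'` of the stretched instance, there is a valid window
start `u` of the original instance such that `ψ` maps the non-multiple times of the
new window into the old window, and `φ` maps the old window into the new one. -/
private lemma new_window {Δ k t' : ℕ} (hΔ : 1 ≤ Δ) (hk : 1 ≤ k) (ht1 : 1 ≤ t')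
    (ht2 : t' ≤ Δ * k + k - Δ) :
    ∃ u, 1 ≤ u ∧ u ≤ Δ * k - Δ + 1 ∧
      (∀ s', ¬ (Δ + 1) ∣ s' → t' ≤ s' → s' ≤ t' + Δ →
        u ≤ s' - s' / (Δ + 1) ∧ s' - s' / (Δ + 1) ≤ u + Δ - 1) ∧
      (∀ x, 1 ≤ x → u ≤ x → x ≤ u + Δ - 1 →
        t' ≤ x + (x - 1) / Δ ∧ x + (x - 1) / Δ ≤ t' + Δ) := by
  have hΔk : Δ ≤ Δ * k := by have := Nat.mul_le_mul_left Δ hk; omega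
  have hab := Nat.div_add_mod t' (Δ + 1)
  have hb : t' % (Δ + 1) < Δ + 1 := Nat.mod_lt _ (by omega)
  set a := t' / (Δ + 1) with ha
  set b := t' % (Δ + 1) with hbdef
  have hbr : (Δ + 1) * a = Δ * a + a := by ring
  refine ⟨Δ * a + max b 1, by omega, ?_, ?_, ?_⟩
  · have hak : a + 1 ≤ k := by
      by_contra hc
      have := Nat.mul_le_mul_left Δ (show k ≤ a by omega)
      omega
    rcases (show a + 2 ≤ k ∨ a + 1 = k by omega) with h | h
    · have := Nat.mul_le_mul_left Δ (show a + 2 ≤ k by omega)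
      have hb2 : Δ * (a + 2) = Δ * a + Δ + Δ := by ring
      omega
    · have hbk : Δ * k = Δ * a + Δ := by rw [← h]; ring
      omega
  · intro s' hnd hlo hhi
    obtain ⟨q', r', hr1', hr2', hsq', hsψ⟩ := nondvd_decomp hnd
    have haq : a ≤ q' := by
      by_contra hc
      have := Nat.mul_le_mul_left Δ (show q' + 1 ≤ a by omega)
      have hb2 : Δ * (q' + 1) = Δ * q' + Δ := by ring
      omega
    have hqa : q' ≤ a + 1 := by
      by_contra hc
      have := Nat.mul_le_mul_left Δ (show a + 2 ≤ q' by omega)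
      have hb2 : Δ * (a + 2) = Δ * a + Δ + Δ := by ring
      omega
    rcases (show q' = a ∨ q' = a + 1 by omega) with h | h <;> subst h
    · omega
    · have hb2 : Δ * (a + 1) = Δ * a + Δ := by ring
      omega
  · intro x hx1 hxlo hxhi
    obtain ⟨c, d, hd1, hd2, hxc, hxm⟩ := tmap_decomp hΔ hx1
    have hac : a ≤ c := by
      by_contra hc
      have := Nat.mul_le_mul_left Δ (show c + 1 ≤ a by omega)
      have hb2 : Δ * (c + 1) = Δ * c + Δ := by ring
      omega
    have hca : c ≤ a + 1 := by
      by_contra hc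
      have := Nat.mul_le_mul_left Δ (show a + 2 ≤ c by omega)
      have hb2 : Δ * (a + 2) = Δ * a + Δ + Δ := by ring
      omega
    rcases (show c = a ∨ c = a + 1 by omega) with h | h <;> subst h
    · omega
    · have hb2 : Δ * (a + 1) = Δ * a + Δ := by ring
      omega

/-- For every window start `t` of the original instance, `t' = φ t` is a valid window
start of the stretched instance; `φ` maps the old window into the new window and `ψ`
maps the non-multiple times of the new window into the old one. -/
private lemma old_window {Δ k t : ℕ} (hΔ : 1 ≤ Δ) (hk : 1 ≤ k) (ht1 : 1 ≤ t)
    (ht2 : t ≤ Δ * k - Δ + 1) :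
    ∃ t', 1 ≤ t' ∧ t' ≤ Δ * k + k - Δ ∧
      (∀ s, 1 ≤ s → t ≤ s → s ≤ t + Δ - 1 →
        t' ≤ s + (s - 1) / Δ ∧ s + (s - 1) / Δ ≤ t' + Δ) ∧
      (∀ s', ¬ (Δ + 1) ∣ s' → t' ≤ s' → s' ≤ t' + Δ →
        t ≤ s' - s' / (Δ + 1) ∧ s' - s' / (Δ + 1) ≤ t + Δ - 1) := by
  have hΔk : Δ ≤ Δ * k := by have := Nat.mul_le_mul_left Δ hk; omega
  obtain ⟨q, r, hr1, hr2, htq, htm⟩ := tmap_decomp hΔ ht1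
  have hqk : q + 1 ≤ k := by
    by_contra hc
    have := Nat.mul_le_mul_left Δ (show k ≤ q by omega)
    omega
  refine ⟨t + (t - 1) / Δ, by omega, by omega, ?_, ?_⟩
  · intro s hs1 hslo hshi
    obtain ⟨qs, rs, hrs1, hrs2, hsq, hsm⟩ := tmap_decomp hΔ hs1
    have hq : q ≤ qs := by
      by_contra hc
      have := Nat.mul_le_mul_left Δ (show qs + 1 ≤ q by omega)
      have hb2 : Δ * (qs + 1) = Δ * qs + Δ := by ring
      omega
    have hq' : qs ≤ q + 1 := by
      by_contra hc
      have := Nat.mul_le_mul_left Δ (show q + 2 ≤ qs by omega)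
      have hb2 : Δ * (q + 2) = Δ * q + Δ + Δ := by ring
      omega
    rcases (show qs = q ∨ qs = q + 1 by omega) with h | h <;> subst h
    · omega
    · have hb2 : Δ * (q + 1) = Δ * q + Δ := by ring
      omega
  · intro s' hnd hlo hhi
    obtain ⟨q', r', hr1', hr2', hsq', hsψ⟩ := nondvd_decomp hnd
    have hq : q ≤ q' := by
      by_contra hc
      have := Nat.mul_le_mul_left Δ (show q' + 1 ≤ q by omega)
      have hb2 : Δ * (q' + 1) = Δ * q' + Δ := by ring
      omega
    have hq' : q' ≤ q + 1 := by
      by_contra hc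
      have := Nat.mul_le_mul_left Δ (show q + 2 ≤ q' by omega)
      have hb2 : Δ * (q + 2) = Δ * q + Δ + Δ := by ring
      omega
    rcases (show q' = q ∨ q' = q + 1 by omega) with h | h <;> subst h
    · omega
    · have hb2 : Δ * (q + 1) = Δ * q + Δ := by ring
      omega

/-- Pushing an original cover forward along `φ` gives a cover of the stretched instance. -/
private lemma forward_cover {V : Type*} [DecidableEq V] (G : SimpleGraph V)
    (lab : Sym2 V → Finset ℕ) (T Δ : ℕ) (hΔ1 : 1 ≤ Δ) (hΔT : Δ ≤ T)
    (hdvd : Δ ∣ T) (hlab : ∀ e, lab e ⊆ Finset.Icc 1 T) (S : Finset (V × ℕ))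
    (hS : SWTVC G lab T Δ S) :
    SWTVC G
      (fun e => (Finset.Icc 1 (T + T / Δ)).filter
        (fun t => ¬ (Δ + 1) ∣ t ∧ t - t / (Δ + 1) ∈ lab e))
      (T + T / Δ) (Δ + 1) (S.image (fun p => (p.1, p.2 + (p.2 - 1) / Δ))) := by
  have hk : Δ * (T / Δ) = T := Nat.mul_div_cancel' hdvd
  have hk1 : 1 ≤ T / Δ := (Nat.one_le_div_iff (by omega)).mpr hΔT
  intro t' ht1 ht2 e he hne
  have ht2' : t' ≤ Δ * (T / Δ) + T / Δ - Δ := by omega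
  obtain ⟨u, hu1, hu2, hpull, hpush⟩ := new_window hΔ1 hk1 ht1 ht2'
  obtain ⟨s', hs'⟩ := hne
  rw [Finset.mem_inter, Finset.mem_filter, Finset.mem_Icc, Finset.mem_Icc] at hs'
  obtain ⟨⟨⟨hs'1, hs'2⟩, hnd, hψlab⟩, hs'lo, hs'hi⟩ := hs'
  have hwin := hpull s' hnd hs'lo (by omega)
  obtain ⟨p, hpS, hpe, hplab, hpIcc⟩ :=
    hS u hu1 (by omega) e he
      ⟨s' - s' / (Δ + 1), Finset.mem_inter.mpr
        ⟨hψlab, Finset.mem_Icc.mpr ⟨hwin.1, hwin.2⟩⟩⟩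
  rw [Finset.mem_Icc] at hpIcc
  have hp1 : 1 ≤ p.2 := by have := hlab e hplab; rw [Finset.mem_Icc] at this; omega
  have hp2 : p.2 ≤ Δ * (T / Δ) := by
    have := hlab e hplab; rw [Finset.mem_Icc] at this; omega
  obtain ⟨hm1, hm2, hm3, hm4⟩ := tmap_props hΔ1 hp1 hp2
  have hnew := hpush p.2 hp1 hpIcc.1 hpIcc.2
  refine ⟨(p.1, p.2 + (p.2 - 1) / Δ), Finset.mem_image.mpr ⟨p, hpS, rfl⟩, hpe, ?_, ?_⟩
  · simp only [Finset.mem_filter, Finset.mem_Icc]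
    refine ⟨⟨hm1, by omega⟩, hm3, ?_⟩
    rw [hm4]; exact hplab
  · rw [Finset.mem_Icc]; omega

/-- Pulling a cover of the stretched instance back along `ψ` gives an original cover. -/
private lemma backward_cover {V : Type*} [DecidableEq V] (G : SimpleGraph V)
    (lab : Sym2 V → Finset ℕ) (T Δ : ℕ) (hΔ1 : 1 ≤ Δ) (hΔT : Δ ≤ T)
    (hdvd : Δ ∣ T) (hlab : ∀ e, lab e ⊆ Finset.Icc 1 T) (S : Finset (V × ℕ))
    (hS : SWTVC G
      (fun e => (Finset.Icc 1 (T + T / Δ)).filter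
        (fun t => ¬ (Δ + 1) ∣ t ∧ t - t / (Δ + 1) ∈ lab e))
      (T + T / Δ) (Δ + 1) S) :
    SWTVC G lab T Δ (S.image (fun p => (p.1, p.2 - p.2 / (Δ + 1)))) := by
  have hk : Δ * (T / Δ) = T := Nat.mul_div_cancel' hdvd
  have hk1 : 1 ≤ T / Δ := (Nat.one_le_div_iff (by omega)).mpr hΔT
  intro t ht1 ht2 e he hne
  have ht2' : t ≤ Δ * (T / Δ) - Δ + 1 := by omega
  obtain ⟨t', ht'1, ht'2, hfwd, hbwd⟩ := old_window hΔ1 hk1 ht1 ht2'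
  obtain ⟨s, hs⟩ := hne
  rw [Finset.mem_inter, Finset.mem_Icc] at hs
  obtain ⟨hslab, hslo, hshi⟩ := hs
  have hs1 : 1 ≤ s := by omega
  have hs2 : s ≤ Δ * (T / Δ) := by
    have := hlab e hslab; rw [Finset.mem_Icc] at this; omega
  obtain ⟨hm1, hm2, hm3, hm4⟩ := tmap_props hΔ1 hs1 hs2
  have hwin := hfwd s hs1 hslo hshi
  obtain ⟨p, hpS, hpe, hplab, hpIcc⟩ :=
    hS t' ht'1 (by omega) e he
      ⟨s + (s - 1) / Δ, Finset.mem_inter.mpr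
        ⟨by
          simp only [Finset.mem_filter, Finset.mem_Icc]
          exact ⟨⟨hm1, by omega⟩, hm3, by rw [hm4]; exact hslab⟩,
        Finset.mem_Icc.mpr ⟨hwin.1, by omega⟩⟩⟩
  simp only [Finset.mem_filter, Finset.mem_Icc] at hplab
  obtain ⟨⟨hp1, hp2⟩, hpnd, hpψ⟩ := hplab
  rw [Finset.mem_Icc] at hpIcc
  have hold := hbwd p.2 hpnd hpIcc.1 (by omega)
  exact ⟨(p.1, p.2 - p.2 / (Δ + 1)), Finset.mem_image.mpr ⟨p, hpS, rfl⟩, hpe, hpψ,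
    Finset.mem_Icc.mpr ⟨hold.1, hold.2⟩⟩

/-- The set of all vertex appearances within `Icc 1 T` is always a cover. -/
private lemma trivial_cover {V : Type*} [Fintype V] [DecidableEq V] (G : SimpleGraph V)
    (lab : Sym2 V → Finset ℕ) (T T0 Δ : ℕ) (hlab : ∀ e, lab e ⊆ Finset.Icc 1 T0) :
    SWTVC G lab T Δ (Finset.univ ×ˢ Finset.Icc 1 T0) := by
  intro t _ _ e _ hne
  obtain ⟨s, hs⟩ := hne
  rw [Finset.mem_inter] at hs
  exact ⟨(e.out.1, s),
    Finset.mem_product.mpr ⟨Finset.mem_univ _, hlab e hs.1⟩,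
    Sym2.out_fst_mem e, hs.1, hs.2⟩

/-- Inserting one edgeless snapshot after every `Δ` consecutive snapshots of `(G,λ)`
(where `Δ ∣ T`) yields a temporal graph `(G,λ')` of lifetime `T' = T + T/Δ` whose
snapshot at time `t` is edgeless if `(Δ+1) ∣ t` and otherwise equals the snapshot of
`(G,λ)` at time `t - ⌊t/(Δ+1)⌋`. The minimum cardinality of a sliding `(Δ+1)`-window
temporal vertex cover of `(G,λ')` equals the minimum cardinality of a sliding
`Δ`-window temporal vertex cover of `(G,λ)`. -/
theorem stmt16 {V : Type*} [Fintype V] [DecidableEq V] (G : SimpleGraph V)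
    (lab : Sym2 V → Finset ℕ) (T Δ : ℕ) (hΔ1 : 1 ≤ Δ) (hΔT : Δ ≤ T)
    (hdvd : Δ ∣ T) (hlab : ∀ e, lab e ⊆ Finset.Icc 1 T) :
    sInf {n | ∃ S : Finset (V × ℕ),
        SWTVC G
          (fun e => (Finset.Icc 1 (T + T / Δ)).filter
            (fun t => ¬ (Δ + 1) ∣ t ∧ t - t / (Δ + 1) ∈ lab e))
          (T + T / Δ) (Δ + 1) S ∧ S.card = n}
      = sInf {n | ∃ S : Finset (V × ℕ), SWTVC G lab T Δ S ∧ S.card = n} := by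
  have hAne : {n | ∃ S : Finset (V × ℕ),
      SWTVC G
        (fun e => (Finset.Icc 1 (T + T / Δ)).filter
          (fun t => ¬ (Δ + 1) ∣ t ∧ t - t / (Δ + 1) ∈ lab e))
        (T + T / Δ) (Δ + 1) S ∧ S.card = n}.Nonempty := by
    refine ⟨_, Finset.univ ×ˢ Finset.Icc 1 (T + T / Δ), ?_, rfl⟩
    exact trivial_cover G _ _ _ _ (fun e => Finset.filter_subset _ _)
  have hBne : {n | ∃ S : Finset (V × ℕ), SWTVC G lab T Δ S ∧ S.card = n}.Nonempty := by
    exact ⟨_, Finset.univ ×ˢ Finset.Icc 1 T, trivial_cover G lab T T Δ hlab, rfl⟩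
  apply le_antisymm
  · obtain ⟨S, hS, hcard⟩ := Nat.sInf_mem hBne
    have hmem : (S.image (fun p : V × ℕ => (p.1, p.2 + (p.2 - 1) / Δ))).card ∈
        {n | ∃ S : Finset (V × ℕ),
          SWTVC G
            (fun e => (Finset.Icc 1 (T + T / Δ)).filter
              (fun t => ¬ (Δ + 1) ∣ t ∧ t - t / (Δ + 1) ∈ lab e))
            (T + T / Δ) (Δ + 1) S ∧ S.card = n} :=
      ⟨_, forward_cover G lab T Δ hΔ1 hΔT hdvd hlab S hS, rfl⟩
    exact le_trans (Nat.sInf_le hmem) (hcard ▸ Finset.card_image_le)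
  · obtain ⟨S, hS, hcard⟩ := Nat.sInf_mem hAne
    have hmem : (S.image (fun p : V × ℕ => (p.1, p.2 - p.2 / (Δ + 1)))).card ∈
        {n | ∃ S : Finset (V × ℕ), SWTVC G lab T Δ S ∧ S.card = n} :=
      ⟨_, backward_cover G lab T Δ hΔ1 hΔT hdvd hlab S hS, rfl⟩
    exact le_trans (Nat.sInf_le hmem) (hcard ▸ Finset.card_image_le)
end

section
/- Let (G,λ) be a temporal graph with lifetime T, Δ ≤ T, and 2 ≤ t ≤ T−Δ+1. For vertex subsets A_1,…,A_Δ ⊆ V, let f(t; A_1,…,A_Δ) denote the minimum cardinality of a sliding Δ-window temporal vertex cover S of (G,λ)|_{[1,t+Δ−1]} satisfying S_{t+i−1} = A_i for i = 1,…,Δ (and f = ∞ if none exists). If ⋃_{i=1}^{Δ}(A_i, t+i−1) is a temporal vertex cover of (G,λ)|_{[t,t+Δ−1]}, then f(t; A_1,…,A_Δ) = |A_Δ| + min over X ⊆ V of f(t−1; X, A_1,…,A_{Δ−1}) (with the convention that the minimum is ∞ if all values are ∞, and ∞ + c = ∞). -/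
/-!
Deleting the layer `(A_Δ, t+Δ-1)` from a cover counted by `f(t; A_1,…,A_Δ)` leaves a cover
counted by `f(t-1; X, A_1,…,A_{Δ-1})`, where `X` is its layer at `t-1`: every window starting
at or before `t-1` ends before `t+Δ-1`. Conversely, adding that layer to a cover counted by
`f(t-1; X, A_1,…,A_{Δ-1})` gives one counted by `f(t; A_1,…,A_Δ)`, since the only new window
`[t, t+Δ-1]` is covered by the layers `A_i` by hypothesis. Both maps change the size by `|A_Δ|`.
-/

open scoped ENNReal

/-- `fval G lab Δ t A` is the minimum cardinality (in `ℕ∞`) of a sliding `Δ`-window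
temporal vertex cover `S` of `(G,λ)|_{[1,t+Δ-1]}` whose vertex appearances at the time
slots `t+i-1` (for `i = 1,…,Δ`) are exactly `(A i, t+i-1)`; it is `⊤ = ∞` if no such
cover exists. -/
noncomputable def fval {V : Type*} [Fintype V] [DecidableEq V] (G : SimpleGraph V)
    (lab : Sym2 V → Finset ℕ) (Δ : ℕ) (t : ℕ) (A : ℕ → Finset V) : ℕ∞ :=
  sInf {n : ℕ∞ | ∃ S : Finset (V × ℕ),
    (∀ p ∈ S, p.2 ∈ Finset.Icc 1 (t + Δ - 1)) ∧
    (∀ q, 1 ≤ q → q ≤ t → ∀ e ∈ G.edgeSet,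
      (lab e ∩ Finset.Icc q (q + Δ - 1)).Nonempty →
      ∃ p ∈ S, p.1 ∈ e ∧ p.2 ∈ lab e ∧ p.2 ∈ Finset.Icc q (q + Δ - 1)) ∧
    (∀ i ∈ Finset.Icc 1 Δ,
      S.filter (fun p => p.2 = t + i - 1) = (A i).image (fun v => (v, t + i - 1))) ∧
    (S.card : ℕ∞) = n}

lemma Finset.filter_snd_eq_image_iff {α β : Type*} [DecidableEq α] [DecidableEq β]
    (S : Finset (α × β)) (X : Finset α) (r : β) :
    S.filter (fun p => p.2 = r) = X.image (fun v => (v, r)) ↔ ∀ v, (v, r) ∈ S ↔ v ∈ X := by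
  constructor
  · intro h v
    simpa using congrArg (fun s => (v, r) ∈ s) h
  · intro h
    ext ⟨v, s⟩
    simp only [Finset.mem_filter, Finset.mem_image, Prod.mk.injEq]
    constructor
    · rintro ⟨hvs, rfl⟩
      exact ⟨v, (h v).mp hvs, rfl, rfl⟩
    · rintro ⟨w, hw, rfl, rfl⟩
      exact ⟨(h w).mpr hw, rfl⟩

section SlidingCover

variable {V : Type*} [DecidableEq V] (G : SimpleGraph V) (lab : Sym2 V → Finset ℕ) (Δ : ℕ)

def IsSlidingCover (t : ℕ) (A : ℕ → Finset V) (S : Finset (V × ℕ)) : Prop :=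
  (∀ p ∈ S, p.2 ∈ Finset.Icc 1 (t + Δ - 1)) ∧
  (∀ q, 1 ≤ q → q ≤ t → ∀ e ∈ G.edgeSet,
    (lab e ∩ Finset.Icc q (q + Δ - 1)).Nonempty →
    ∃ p ∈ S, p.1 ∈ e ∧ p.2 ∈ lab e ∧ p.2 ∈ Finset.Icc q (q + Δ - 1)) ∧
  (∀ i ∈ Finset.Icc 1 Δ,
    S.filter (fun p => p.2 = t + i - 1) = (A i).image (fun v => (v, t + i - 1)))

lemma fval_eq_iInf [Fintype V] (t : ℕ) (A : ℕ → Finset V) :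
    fval G lab Δ t A = ⨅ (S) (_ : IsSlidingCover G lab Δ t A S), (S.card : ℕ∞) := by
  refine (congrArg sInf ?_).trans
    (sInf_image (s := {S | IsSlidingCover G lab Δ t A S}) (f := fun S => (S.card : ℕ∞)))
  ext n
  simp [IsSlidingCover, and_assoc]

variable {G lab Δ} in
lemma fval_le_card [Fintype V] {t : ℕ} {A : ℕ → Finset V} {S : Finset (V × ℕ)}
    (hS : IsSlidingCover G lab Δ t A S) : fval G lab Δ t A ≤ S.card := by
  rw [fval_eq_iInf]
  exact iInf₂_le S hS

def prependLayer (X : Finset V) (A : ℕ → Finset V) : ℕ → Finset V :=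
  fun i => if i = 1 then X else A (i - 1)

variable {G lab Δ} {s : ℕ} {A : ℕ → Finset V}

lemma IsSlidingCover.restrict {S : Finset (V × ℕ)} (hΔ : 1 ≤ Δ)
    (hS : IsSlidingCover G lab Δ (s + 1) A S) :
    ∃ X S', IsSlidingCover G lab Δ s (prependLayer X A) S' ∧ S.card = S'.card + (A Δ).card := by
  obtain ⟨hrange, hcover, hlayer⟩ := hS
  refine ⟨(S.filter (fun p => p.2 = s)).image Prod.fst, S.filter (fun p => p.2 ≠ s + Δ),
    ⟨?_, ?_, ?_⟩, ?_⟩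
  · intro p hp
    rw [Finset.mem_filter] at hp
    have := Finset.mem_Icc.mp (hrange p hp.1)
    exact Finset.mem_Icc.mpr (by omega)
  · intro q hq1 hqs e he hne
    obtain ⟨p, hpS, hpe, hplab, hpq⟩ := hcover q hq1 (by omega) e he hne
    have := Finset.mem_Icc.mp hpq
    exact ⟨p, Finset.mem_filter.mpr ⟨hpS, by omega⟩, hpe, hplab, hpq⟩
  · intro i hi
    have hi := Finset.mem_Icc.mp hi
    rw [Finset.filter_snd_eq_image_iff]
    intro v
    rcases eq_or_ne i 1 with rfl | hi1
    · simp only [prependLayer, ↓reduceIte, Nat.add_sub_cancel, Finset.mem_filter,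
        Finset.mem_image]
      exact ⟨fun h => ⟨(v, s), ⟨h.1, rfl⟩, rfl⟩,
        fun ⟨p, ⟨hp, hps⟩, hpv⟩ => ⟨by rw [← hpv, ← hps]; exact hp, by omega⟩⟩
    · have hv := (Finset.filter_snd_eq_image_iff _ _ _).mp
        (hlayer (i - 1) (Finset.mem_Icc.mpr (by omega))) v
      rw [show s + 1 + (i - 1) - 1 = s + i - 1 by omega] at hv
      simp only [prependLayer, if_neg hi1, Finset.mem_filter, ← hv, and_iff_left_iff_imp]
      intro _
      omega
  · have htop := hlayer Δ (Finset.mem_Icc.mpr ⟨hΔ, le_rfl⟩)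
    rw [show s + 1 + Δ - 1 = s + Δ by omega] at htop
    rw [← Finset.card_filter_add_card_filter_not (fun p : V × ℕ => p.2 = s + Δ) (s := S), htop,
      Finset.card_image_of_injective _ (Prod.mk_left_injective _), add_comm]

lemma IsSlidingCover.extend {X : Finset V} {S' : Finset (V × ℕ)}
    (hΔ : 1 ≤ Δ)
    (hcov : ∀ e ∈ G.edgeSet, (lab e ∩ Finset.Icc (s + 1) (s + 1 + Δ - 1)).Nonempty →
        ∃ i ∈ Finset.Icc 1 Δ, ∃ v ∈ A i, v ∈ e ∧ (s + 1 + i - 1) ∈ lab e)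
    (hS' : IsSlidingCover G lab Δ s (prependLayer X A) S') :
    ∃ S, IsSlidingCover G lab Δ (s + 1) A S ∧ S.card = S'.card + (A Δ).card := by
  obtain ⟨hrange, hcover, hlayer⟩ := hS'
  have hmem : ∀ i, 1 ≤ i → i < Δ → ∀ v, (v, s + i) ∈ S' ↔ v ∈ A i := by
    intro i hi1 hiΔ v
    have hv := (Finset.filter_snd_eq_image_iff _ _ _).mp
      (hlayer (i + 1) (Finset.mem_Icc.mpr (by omega))) v
    simpa [prependLayer, show s + (i + 1) - 1 = s + i by omega, show i ≠ 0 by omega] using hv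
  have hnew : ∀ p ∈ S', p.2 < s + Δ := fun p hp => by
    have := Finset.mem_Icc.mp (hrange p hp); omega
  refine ⟨S' ∪ (A Δ).image (fun v => (v, s + Δ)), ⟨?_, ?_, ?_⟩, ?_⟩
  · intro p hp
    rcases Finset.mem_union.mp hp with hp | hp
    · have := Finset.mem_Icc.mp (hrange p hp)
      exact Finset.mem_Icc.mpr (by omega)
    · obtain ⟨v, _, rfl⟩ := Finset.mem_image.mp hp
      exact Finset.mem_Icc.mpr (by omega)
  · intro q hq1 hqs e he hne
    rcases lt_or_eq_of_le hqs with hqs | rfl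
    · obtain ⟨p, hpS, hpe, hplab, hpq⟩ := hcover q hq1 (by omega) e he hne
      exact ⟨p, Finset.mem_union_left _ hpS, hpe, hplab, hpq⟩
    · obtain ⟨i, hi, v, hv, hve, hlab⟩ := hcov e he hne
      have hi := Finset.mem_Icc.mp hi
      rw [show s + 1 + i - 1 = s + i by omega] at hlab
      refine ⟨(v, s + i), ?_, hve, hlab, Finset.mem_Icc.mpr (by omega)⟩
      rcases lt_or_eq_of_le hi.2 with hiΔ | rfl
      · exact Finset.mem_union_left _ ((hmem i hi.1 hiΔ v).mpr hv)
      · exact Finset.mem_union_right _ (Finset.mem_image_of_mem _ hv)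
  · intro i hi
    have hi := Finset.mem_Icc.mp hi
    rw [show s + 1 + i - 1 = s + i by omega, Finset.filter_snd_eq_image_iff]
    intro v
    rcases lt_or_eq_of_le hi.2 with hiΔ | rfl
    · simpa [hiΔ.ne'] using hmem i hi.1 hiΔ v
    · have : (v, s + i) ∉ S' := fun h => lt_irrefl _ (hnew _ h)
      simp [this]
  · rw [Finset.card_union_of_disjoint, Finset.card_image_of_injective _ (Prod.mk_left_injective _)]
    rw [Finset.disjoint_left]
    rintro p hp hp'
    obtain ⟨v, _, rfl⟩ := Finset.mem_image.mp hp'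
    exact (hnew _ hp).ne rfl

variable [Fintype V]

lemma fval_succ_le_card_add_fval (hΔ : 1 ≤ Δ)
    (hcov : ∀ e ∈ G.edgeSet, (lab e ∩ Finset.Icc (s + 1) (s + 1 + Δ - 1)).Nonempty →
        ∃ i ∈ Finset.Icc 1 Δ, ∃ v ∈ A i, v ∈ e ∧ (s + 1 + i - 1) ∈ lab e)
    (X : Finset V) :
    fval G lab Δ (s + 1) A ≤ (A Δ).card + fval G lab Δ s (prependLayer X A) := by
  rw [fval_eq_iInf G lab Δ s, ENat.add_iInf₂]
  refine le_iInf₂ fun S' hS' => ?_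
  obtain ⟨S, hS, hcard⟩ := hS'.extend hΔ hcov
  calc fval G lab Δ (s + 1) A ≤ S.card := fval_le_card hS
    _ = _ := by rw [hcard]; push_cast; ring

lemma iInf_card_add_fval_le_fval_succ (hΔ : 1 ≤ Δ) :
    ⨅ X, ((A Δ).card : ℕ∞) + fval G lab Δ s (prependLayer X A) ≤ fval G lab Δ (s + 1) A := by
  rw [fval_eq_iInf G lab Δ (s + 1)]
  refine le_iInf₂ fun S hS => ?_
  obtain ⟨X, S', hS', hcard⟩ := hS.restrict hΔ
  calc ⨅ X, ((A Δ).card : ℕ∞) + fval G lab Δ s (prependLayer X A)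
      ≤ (A Δ).card + fval G lab Δ s (prependLayer X A) := iInf_le _ X
    _ ≤ (A Δ).card + S'.card := by gcongr; exact fval_le_card hS'
    _ = S.card := by rw [hcard]; push_cast; ring

end SlidingCover

theorem stmt18_general {V : Type*} [Fintype V] [DecidableEq V] (G : SimpleGraph V)
    (lab : Sym2 V → Finset ℕ) (Δ t : ℕ)
    (hΔ1 : 1 ≤ Δ) (ht2 : 2 ≤ t)
    (A : ℕ → Finset V)
    (hcov : ∀ e ∈ G.edgeSet, (lab e ∩ Finset.Icc t (t + Δ - 1)).Nonempty →
        ∃ i ∈ Finset.Icc 1 Δ, ∃ v ∈ A i, v ∈ e ∧ (t + i - 1) ∈ lab e) :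
    fval G lab Δ t A = ((A Δ).card : ℕ∞) +
      ⨅ X : Finset V, fval G lab Δ (t - 1) (fun i => if i = 1 then X else A (i - 1)) := by
  obtain ⟨s, rfl⟩ : ∃ s, t = s + 1 := ⟨t - 1, by omega⟩
  change _ = _ + ⨅ X, fval G lab Δ (s + 1 - 1) (prependLayer X A)
  rw [Nat.add_sub_cancel, ENat.add_iInf]
  exact le_antisymm (le_iInf fun X => fval_succ_le_card_add_fval hΔ1 hcov X)
    (iInf_card_add_fval_le_fval_succ hΔ1)

/-- The dynamic-programming recursion: if `⋃_{i=1}^{Δ} (A i, t+i-1)` is a temporal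
vertex cover of `(G,λ)|_{[t,t+Δ-1]}` and `2 ≤ t ≤ T-Δ+1`, then
`f(t; A_1,…,A_Δ) = |A_Δ| + min_{X ⊆ V} f(t-1; X, A_1,…,A_{Δ-1})`
(in `ℕ∞`, so the minimum is `∞` if all values are `∞`, and `∞ + c = ∞`). -/
theorem stmt18 {V : Type*} [Fintype V] [DecidableEq V] (G : SimpleGraph V)
    (lab : Sym2 V → Finset ℕ) (T Δ t : ℕ)
    (hΔ1 : 1 ≤ Δ) (hΔT : Δ ≤ T) (ht2 : 2 ≤ t) (htT : t ≤ T - Δ + 1)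
    (A : ℕ → Finset V)
    (hcov : ∀ e ∈ G.edgeSet, (lab e ∩ Finset.Icc t (t + Δ - 1)).Nonempty →
        ∃ i ∈ Finset.Icc 1 Δ, ∃ v ∈ A i, v ∈ e ∧ (t + i - 1) ∈ lab e) :
    fval G lab Δ t A = ((A Δ).card : ℕ∞) +
      ⨅ X : Finset V, fval G lab Δ (t - 1) (fun i => if i = 1 then X else A (i - 1)) :=
  stmt18_general G lab Δ t hΔ1 ht2 A hcov
end

section
/- Let (G,λ) be a temporal graph of lifetime T whose underlying graph is a single edge uv with nonempty label set L = λ(uv) ⊆ [1,T], and let Δ ≤ T. The minimum cardinality of a sliding Δ-window temporal vertex cover of (G,λ) equals the minimum number of intervals I_i = [i−Δ+1, i] ∩ [1, T−Δ+1] (over i ∈ L) needed to cover ⋃_{i∈L} I_i, and this equals the size of the set produced by the greedy rule: starting from the leftmost point of ⋃_{i∈L} I_i, repeatedly choose among the intervals containing the leftmost uncovered point the one with the largest right endpoint. -/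
/-- The greedy rule for interval covering: while an uncovered point of `⋃_{i∈L} I_i`
remains, take the leftmost uncovered point `p` and, among the intervals `I_i` (`i ∈ L`)
containing `p`, pick one with the largest right endpoint (here: the largest such `i`,
whose interval has the largest right endpoint `min i (T-Δ+1)`). -/
def greedy (T Δ : ℕ) (L : Finset ℕ) : ℕ → Finset ℕ → Finset ℕ
  | 0, _ => ∅
  | (fuel + 1), covered =>
    if h : ((L.biUnion (Ival T Δ)) \ covered).Nonempty then
      let p := ((L.biUnion (Ival T Δ)) \ covered).min' h
      if hc : (L.filter (fun i => p ∈ Ival T Δ i)).Nonempty then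
        insert ((L.filter (fun i => p ∈ Ival T Δ i)).max' hc)
          (greedy T Δ L fuel (covered ∪ Ival T Δ ((L.filter (fun i => p ∈ Ival T Δ i)).max' hc)))
      else ∅
    else ∅

lemma mem_Ival {T Δ i x : ℕ} :
    x ∈ Ival T Δ i ↔ i + 1 - Δ ≤ x ∧ x ≤ i ∧ 1 ≤ x ∧ x ≤ T - Δ + 1 := by
  simp [Ival, Finset.mem_inter, Finset.mem_Icc, and_assoc]

lemma greedy_succ (T Δ : ℕ) (L : Finset ℕ) (fuel : ℕ) (C : Finset ℕ)
    (h : ((L.biUnion (Ival T Δ)) \ C).Nonempty)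
    (hc : (L.filter (fun i => ((L.biUnion (Ival T Δ)) \ C).min' h ∈ Ival T Δ i)).Nonempty) :
    greedy T Δ L (fuel + 1) C =
      insert ((L.filter (fun i => ((L.biUnion (Ival T Δ)) \ C).min' h ∈ Ival T Δ i)).max' hc)
        (greedy T Δ L fuel (C ∪ Ival T Δ
          ((L.filter (fun i => ((L.biUnion (Ival T Δ)) \ C).min' h ∈ Ival T Δ i)).max' hc))) := by
  rw [greedy, dif_pos h, dif_pos hc]

section
variable (T Δ : ℕ) (L : Finset ℕ)

lemma hc_of_h {C : Finset ℕ} (h : ((L.biUnion (Ival T Δ)) \ C).Nonempty) :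
    (L.filter (fun i => ((L.biUnion (Ival T Δ)) \ C).min' h ∈ Ival T Δ i)).Nonempty := by
  have hpU := Finset.min'_mem _ h
  obtain ⟨i0, hi0L, hi0⟩ := Finset.mem_biUnion.mp (Finset.mem_sdiff.mp hpU).1
  exact ⟨i0, Finset.mem_filter.mpr ⟨hi0L, hi0⟩⟩

lemma greedy_subset : ∀ fuel C, greedy T Δ L fuel C ⊆ L := by
  intro fuel
  induction fuel with
  | zero => intro C; simp [greedy]
  | succ fuel ih =>
    intro C
    by_cases h : ((L.biUnion (Ival T Δ)) \ C).Nonempty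
    · rw [greedy_succ T Δ L fuel C h (hc_of_h T Δ L h)]
      intro x hx
      rcases Finset.mem_insert.mp hx with rfl | hx
      · exact Finset.mem_of_mem_filter _ (Finset.max'_mem _ _)
      · exact ih _ hx
    · rw [greedy, dif_neg h]; simp

lemma greedy_covers : ∀ fuel C, ((L.biUnion (Ival T Δ)) \ C).card ≤ fuel →
    ∀ x ∈ (L.biUnion (Ival T Δ)) \ C, ∃ i ∈ greedy T Δ L fuel C, x ∈ Ival T Δ i := by
  intro fuel
  induction fuel with
  | zero =>
    intro C hcard x hx
    exact absurd (Finset.card_pos.mpr ⟨x, hx⟩) (by omega)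
  | succ fuel ih =>
    intro C hcard x hx
    have h : ((L.biUnion (Ival T Δ)) \ C).Nonempty := ⟨x, hx⟩
    have hc := hc_of_h T Δ L h
    set p := ((L.biUnion (Ival T Δ)) \ C).min' h with hp
    set j := (L.filter (fun i => p ∈ Ival T Δ i)).max' hc with hj
    rw [greedy_succ T Δ L fuel C h hc]
    have hpj : p ∈ Ival T Δ j := (Finset.mem_filter.mp (Finset.max'_mem _ hc)).2
    by_cases hxj : x ∈ Ival T Δ j
    · exact ⟨j, Finset.mem_insert_self _ _, hxj⟩
    · have hx' : x ∈ (L.biUnion (Ival T Δ)) \ (C ∪ Ival T Δ j) := by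
        rw [Finset.mem_sdiff, Finset.mem_union]
        exact ⟨(Finset.mem_sdiff.mp hx).1, fun h' => h'.elim (Finset.mem_sdiff.mp hx).2 hxj⟩
      have hsub : (L.biUnion (Ival T Δ)) \ (C ∪ Ival T Δ j) ⊂ (L.biUnion (Ival T Δ)) \ C := by
        constructor
        · intro y hy
          rw [Finset.mem_sdiff, Finset.mem_union] at hy
          exact Finset.mem_sdiff.mpr ⟨hy.1, fun h' => hy.2 (Or.inl h')⟩
        · intro hss
          have := hss (Finset.min'_mem _ h)
          rw [Finset.mem_sdiff, Finset.mem_union] at this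
          exact this.2 (Or.inr hpj)
      have hcard' : ((L.biUnion (Ival T Δ)) \ (C ∪ Ival T Δ j)).card ≤ fuel := by
        have := Finset.card_lt_card hsub
        omega
      obtain ⟨i, hi, hxi⟩ := ih _ hcard' x hx'
      exact ⟨i, Finset.mem_insert_of_mem hi, hxi⟩

lemma greedy_le : ∀ fuel C (F : Finset ℕ), F ⊆ L →
    (∀ x ∈ (L.biUnion (Ival T Δ)) \ C, ∃ i ∈ F, x ∈ Ival T Δ i) →
    (greedy T Δ L fuel C).card ≤ F.card := by
  intro fuel
  induction fuel with
  | zero => intro C F _ _; simp [greedy]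
  | succ fuel ih =>
    intro C F hFL hFcov
    by_cases h : ((L.biUnion (Ival T Δ)) \ C).Nonempty
    · have hc := hc_of_h T Δ L h
      set p := ((L.biUnion (Ival T Δ)) \ C).min' h with hp
      set j := (L.filter (fun i => p ∈ Ival T Δ i)).max' hc with hj
      rw [greedy_succ T Δ L fuel C h hc]
      have hpU : p ∈ (L.biUnion (Ival T Δ)) \ C := Finset.min'_mem _ h
      obtain ⟨i, hiF, hpi⟩ := hFcov p hpU
      have hpj : p ∈ Ival T Δ j := (Finset.mem_filter.mp (Finset.max'_mem _ hc)).2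
      have hij : i ≤ j := Finset.le_max' (L.filter (fun k => p ∈ Ival T Δ k)) i (Finset.mem_filter.mpr ⟨hFL hiF, hpi⟩)
      -- F.erase i covers the remaining points
      have hcov' : ∀ x ∈ (L.biUnion (Ival T Δ)) \ (C ∪ Ival T Δ j),
          ∃ k ∈ F.erase i, x ∈ Ival T Δ k := by
        intro x hx
        rw [Finset.mem_sdiff, Finset.mem_union] at hx
        have hxU : x ∈ (L.biUnion (Ival T Δ)) \ C :=
          Finset.mem_sdiff.mpr ⟨hx.1, fun h' => hx.2 (Or.inl h')⟩
        obtain ⟨k, hkF, hxk⟩ := hFcov x hxU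
        refine ⟨k, Finset.mem_erase.mpr ⟨?_, hkF⟩, hxk⟩
        rintro rfl
        -- x ∈ Ival i, x ≥ p, so x ∈ Ival j : contradiction
        apply hx.2
        right
        rw [mem_Ival] at hxk hpi hpj ⊢
        have hpx : p ≤ x := Finset.min'_le _ _ hxU
        omega
      have hrec := ih (C ∪ Ival T Δ j) (F.erase i) ((Finset.erase_subset _ _).trans hFL) hcov'
      calc (insert j (greedy T Δ L fuel (C ∪ Ival T Δ j))).card
          ≤ (greedy T Δ L fuel (C ∪ Ival T Δ j)).card + 1 := Finset.card_insert_le _ _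
        _ ≤ (F.erase i).card + 1 := by omega
        _ = F.card := by rw [Finset.card_erase_of_mem hiF]; have := Finset.card_pos.mpr ⟨i, hiF⟩; omega
    · rw [greedy, dif_neg h]; simp
end


/-- For the single-edge temporal graph on `u,v` (vertices `Fin 2`) with label set `L`,
the minimum cardinality of a sliding `Δ`-window temporal vertex cover equals the minimum
number of intervals `I_i` (`i ∈ L`) needed to cover `⋃_{i∈L} I_i`, and this equals the
size of the set produced by the greedy rule. -/
theorem stmt19 (T Δ : ℕ) (hΔ1 : 1 ≤ Δ) (hΔT : Δ ≤ T)
    (L : Finset ℕ) (hL : L.Nonempty) (hLT : L ⊆ Finset.Icc 1 T) :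
    sInf {n | ∃ S : Finset (Fin 2 × ℕ),
        (∀ t, 1 ≤ t → t ≤ T - Δ + 1 → (L ∩ Finset.Icc t (t + Δ - 1)).Nonempty →
          ∃ p ∈ S, p.2 ∈ L ∧ p.2 ∈ Finset.Icc t (t + Δ - 1)) ∧ S.card = n}
      = sInf {n | ∃ F : Finset ℕ, F ⊆ L ∧
          (∀ x ∈ L.biUnion (Ival T Δ), ∃ i ∈ F, x ∈ Ival T Δ i) ∧ F.card = n} ∧
    sInf {n | ∃ F : Finset ℕ, F ⊆ L ∧
        (∀ x ∈ L.biUnion (Ival T Δ), ∃ i ∈ F, x ∈ Ival T Δ i) ∧ F.card = n}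
      = (greedy T Δ L (L.biUnion (Ival T Δ)).card ∅).card := by
  set U := L.biUnion (Ival T Δ) with hU
  set g := greedy T Δ L U.card ∅ with hg
  set A := {n | ∃ S : Finset (Fin 2 × ℕ),
        (∀ t, 1 ≤ t → t ≤ T - Δ + 1 → (L ∩ Finset.Icc t (t + Δ - 1)).Nonempty →
          ∃ p ∈ S, p.2 ∈ L ∧ p.2 ∈ Finset.Icc t (t + Δ - 1)) ∧ S.card = n} with hA
  set B := {n | ∃ F : Finset ℕ, F ⊆ L ∧
          (∀ x ∈ U, ∃ i ∈ F, x ∈ Ival T Δ i) ∧ F.card = n} with hB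
  -- greedy is a valid interval cover
  have hgB : g.card ∈ B := by
    refine ⟨g, greedy_subset T Δ L _ _, ?_, rfl⟩
    intro x hx
    exact greedy_covers T Δ L U.card ∅ (by rw [Finset.sdiff_empty]) x (by rw [Finset.sdiff_empty]; exact hx)
  have hBne : B.Nonempty := ⟨g.card, hgB⟩
  -- From an interval cover, build a TVC of the same size
  have hBA : ∀ n ∈ B, ∃ m ∈ A, m ≤ n := by
    rintro n ⟨F, hFL, hFcov, rfl⟩
    refine ⟨(F.image (fun i => ((0 : Fin 2), i))).card, ⟨F.image (fun i => ((0 : Fin 2), i)), ?_, rfl⟩, ?_⟩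
    · intro t ht1 ht2 ⟨i, hi⟩
      rw [Finset.mem_inter, Finset.mem_Icc] at hi
      have htU : t ∈ U := Finset.mem_biUnion.mpr ⟨i, hi.1, mem_Ival.mpr (by omega)⟩
      obtain ⟨k, hkF, htk⟩ := hFcov t htU
      rw [mem_Ival] at htk
      exact ⟨((0 : Fin 2), k), Finset.mem_image.mpr ⟨k, hkF, rfl⟩, hFL hkF,
        Finset.mem_Icc.mpr (by omega)⟩
    · exact Finset.card_image_le
  -- From a TVC, build an interval cover of at most the same size
  have hAB : ∀ n ∈ A, ∃ m ∈ B, m ≤ n := by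
    rintro n ⟨S, hS, rfl⟩
    refine ⟨((S.filter (fun p => p.2 ∈ L)).image Prod.snd).card,
      ⟨(S.filter (fun p => p.2 ∈ L)).image Prod.snd, ?_, ?_, rfl⟩, ?_⟩
    · intro i hi
      obtain ⟨p, hp, rfl⟩ := Finset.mem_image.mp hi
      exact (Finset.mem_filter.mp hp).2
    · intro x hx
      obtain ⟨i, hiL, hxi⟩ := Finset.mem_biUnion.mp hx
      rw [mem_Ival] at hxi
      obtain ⟨q, hqS, hqL, hq⟩ := hS x (by omega) (by omega)
        ⟨i, Finset.mem_inter.mpr ⟨hiL, Finset.mem_Icc.mpr (by omega)⟩⟩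
      rw [Finset.mem_Icc] at hq
      exact ⟨q.2, Finset.mem_image.mpr ⟨q, Finset.mem_filter.mpr ⟨hqS, hqL⟩, rfl⟩,
        mem_Ival.mpr (by omega)⟩
    · exact Finset.card_image_le.trans (Finset.card_filter_le _ _)
  have hAne : A.Nonempty := by
    obtain ⟨m, hm, _⟩ := hBA _ hgB; exact ⟨m, hm⟩
  constructor
  · apply le_antisymm
    · apply le_csInf hBne
      intro n hn
      obtain ⟨m, hm, hmn⟩ := hBA n hn
      exact (Nat.sInf_le hm).trans hmn
    · apply le_csInf hAne
      intro n hn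
      obtain ⟨m, hm, hmn⟩ := hAB n hn
      exact (Nat.sInf_le hm).trans hmn
  · apply le_antisymm
    · exact Nat.sInf_le hgB
    · apply le_csInf hBne
      rintro n ⟨F, hFL, hFcov, rfl⟩
      exact greedy_le T Δ L U.card ∅ F hFL (fun x hx => hFcov x ((Finset.mem_sdiff.mp hx).1))
end
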